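/- arXiv:2411.07000 — 7 statements merged into one kernel-verified Lean document; each statement's English description precedes it below -/
import Mathlib

section
/- Let G be a finite simple connected graph of order n ≥ 3. Then the total distinguishing number of G equals the distinguishing number of its subdivision graph: D''(G) = D(S(G)). -/
open SimpleGraph

/-- The middle graph `M(G)`: vertices are `V(G) ⊕ E(G)`; two edges are adjacent
iff they are distinct and share an endpoint; a vertex and an edge are adjacent
iff the vertex is incident to the edge. -/
def middleGraph {V : Type*} (G : SimpleGraph V) : SimpleGraph (V ⊕ G.edgeSet) :=
  SimpleGraph.fromRel fun x y =>
    match x, y with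
    | Sum.inr e, Sum.inr f => e ≠ f ∧ ∃ v, v ∈ (e : Sym2 V) ∧ v ∈ (f : Sym2 V)
    | Sum.inl v, Sum.inr e => v ∈ (e : Sym2 V)
    | _, _ => False

/-- The subdivision graph `S(G)`: vertices are `V(G) ⊕ E(G)`; `v ∈ V(G)` and
`e ∈ E(G)` are adjacent iff `v` is incident to `e`. -/
def subdivisionGraph {V : Type*} (G : SimpleGraph V) : SimpleGraph (V ⊕ G.edgeSet) :=
  SimpleGraph.fromRel fun x y =>
    match x, y with
    | Sum.inl v, Sum.inr e => v ∈ (e : Sym2 V)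
    | _, _ => False

/-- The endline graph `G⁺`: to each vertex `v` of `G` (coded `Sum.inl v`) we attach a new
pendant vertex (coded `Sum.inr v`) via a new (endline) edge. -/
def endlineGraph {V : Type*} (G : SimpleGraph V) : SimpleGraph (V ⊕ V) :=
  SimpleGraph.fromRel fun x y =>
    match x, y with
    | Sum.inl u, Sum.inl v => G.Adj u v
    | Sum.inl v, Sum.inr u => v = u
    | _, _ => False

/-- A vertex coloring is distinguishing if the only automorphism preserving it is the identity. -/
def IsDistinguishingVertexColoring {V α : Type*} (G : SimpleGraph V) (c : V → α) : Prop :=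
  ∀ φ : G ≃g G, (∀ v, c (φ v) = c v) → ∀ v, φ v = v

/-- A proper vertex coloring assigns different colors to adjacent vertices. -/
def IsProperVertexColoring {V α : Type*} (G : SimpleGraph V) (c : V → α) : Prop :=
  ∀ u v, G.Adj u v → c u ≠ c v

/-- The distinguishing number `D(G)`. -/
noncomputable def distinguishingNumber {V : Type*} (G : SimpleGraph V) : ℕ :=
  sInf {r | ∃ c : V → Fin r, IsDistinguishingVertexColoring G c}

/-- The distinguishing chromatic number `χ_D(G)`. -/
noncomputable def distinguishingChromaticNumber {V : Type*} (G : SimpleGraph V) : ℕ :=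
  sInf {r | ∃ c : V → Fin r,
    IsProperVertexColoring G c ∧ IsDistinguishingVertexColoring G c}

/-- An edge coloring is distinguishing if the only automorphism preserving it is the identity. -/
def IsDistinguishingEdgeColoring {V α : Type*} (G : SimpleGraph V) (c : G.edgeSet → α) : Prop :=
  ∀ φ : G ≃g G, (∀ e, c (φ.mapEdgeSet e) = c e) → ∀ v, φ v = v

/-- A proper edge coloring assigns different colors to distinct edges sharing an endpoint. -/
def IsProperEdgeColoring {V α : Type*} (G : SimpleGraph V) (c : G.edgeSet → α) : Prop :=
  ∀ e f : G.edgeSet, e ≠ f → (∃ v, v ∈ (e : Sym2 V) ∧ v ∈ (f : Sym2 V)) → c e ≠ c f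

/-- The distinguishing index `D'(G)`. -/
noncomputable def distinguishingIndex {V : Type*} (G : SimpleGraph V) : ℕ :=
  sInf {r | ∃ c : G.edgeSet → Fin r, IsDistinguishingEdgeColoring G c}

/-- The distinguishing chromatic index `χ'_D(G)`. -/
noncomputable def distinguishingChromaticIndex {V : Type*} (G : SimpleGraph V) : ℕ :=
  sInf {r | ∃ c : G.edgeSet → Fin r,
    IsProperEdgeColoring G c ∧ IsDistinguishingEdgeColoring G c}

/-- The total distinguishing number `D''(G)`: the least `d` such that there is a (not
necessarily proper) coloring of vertices and edges with `d` colors preserved only by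
the identity automorphism. -/
noncomputable def totalDistinguishingNumber {V : Type*} (G : SimpleGraph V) : ℕ :=
  sInf {d | ∃ (cV : V → Fin d) (cE : G.edgeSet → Fin d),
    ∀ φ : G ≃g G,
      ((∀ v, cV (φ v) = cV v) ∧ (∀ e, cE (φ.mapEdgeSet e) = cE e)) → ∀ v, φ v = v}

/-!
An automorphism of `G` induces one of `S(G)`, so a distinguishing colouring of `S(G)` restricts to
a distinguishing total colouring of `G`: `D''(G) ≤ D(S(G))`.

Conversely, `S(G)` is connected and bipartite with sides `V(G)` and `E(G)`, so each of its
automorphisms preserves or swaps the two sides. One preserving the sides is induced by an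
automorphism of `G`, because two vertices of `G` are adjacent iff they have a common neighbour in
`S(G)`. Hence if no automorphism swaps the sides, a distinguishing total colouring of `G` is a
distinguishing colouring of `S(G)`. If one does, every vertex of `S(G)` has degree 2 like the
edge-vertices, so `S(G)` is a cycle of length `2n ≥ 6`. Then `D(S(G)) ≤ 2`, while the square
of a rotation of this cycle preserves the sides and so comes from a nontrivial automorphism of
`G`, which forces `D''(G) ≥ 2`.
-/

open Sum

-- the cycle `C_m`, with vertex set `ZMod m`
local notation "𝒞" m:max => circulantGraph ({1} : Set (ZMod m))

namespace SimpleGraph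

section CirculantCycle

variable {R : Type*} [Ring R]

theorem circulantGraph_one_adj_add_one [Nontrivial R] (x : R) :
    (circulantGraph ({1} : Set R)).Adj x (x + 1) := by
  simp

theorem eq_add_one_or_eq_sub_one_of_circulantGraph_one_adj {x y : R}
    (h : (circulantGraph ({1} : Set R)).Adj x y) : y = x + 1 ∨ y = x - 1 := by
  rcases h.2 with h | h
  · right; rw [Set.mem_singleton_iff] at h; rw [← h]; abel
  · left; rw [Set.mem_singleton_iff] at h; rw [← h]; abel

theorem add_eq_two_mul_of_circulantGraph_one_adj {x y z : R}
    (hy : (circulantGraph ({1} : Set R)).Adj x y) (hz : (circulantGraph ({1} : Set R)).Adj x z)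
    (hyz : y ≠ z) : y + z = 2 * x := by
  rcases eq_add_one_or_eq_sub_one_of_circulantGraph_one_adj hy with rfl | rfl <;>
    rcases eq_add_one_or_eq_sub_one_of_circulantGraph_one_adj hz with rfl | rfl <;>
    first | exact absurd rfl hyz | noncomm_ring

end CirculantCycle

def circulantGraphAddRight {G : Type*} [AddGroup G] (s : Set G) (d : G) :
    circulantGraph s ≃g circulantGraph s where
  toEquiv := Equiv.addRight d
  map_rel_iff' := circulantGraph_adj_translate

@[simp]
theorem circulantGraphAddRight_apply {G : Type*} [AddGroup G] (s : Set G) (d x : G) :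
    circulantGraphAddRight s d x = x + d :=
  rfl

end SimpleGraph

theorem ZMod.natCast_ne_zero_of_pos_of_lt {k m : ℕ} (h0 : 0 < k) (hk : k < m) :
    (k : ZMod m) ≠ 0 := fun h =>
  Nat.not_dvd_of_pos_of_lt h0 hk ((ZMod.natCast_eq_zero_iff k m).1 h)

section ZModCycle

variable {m : ℕ}

theorem exists_affine_of_circulantGraph_one_iso (hm : 3 ≤ m) (θ : 𝒞 m ≃g 𝒞 m) :
    ∃ a ε : ZMod m, (ε = 1 ∨ ε = -1) ∧ ∀ x, θ x = a + ε * x := by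
  have : Fact (1 < m) := ⟨by omega⟩
  have htwo : (2 : ZMod m) ≠ 0 := by exact_mod_cast ZMod.natCast_ne_zero_of_pos_of_lt two_pos hm
  have hstep (y : ZMod m) : θ (y + 1 + 1) = 2 * θ (y + 1) - θ y := by
    have hnext := θ.map_adj_iff.2 (circulantGraph_one_adj_add_one (y + 1))
    have hprev := θ.map_adj_iff.2 (circulantGraph_one_adj_add_one y).symm
    have hne : θ (y + 1 + 1) ≠ θ y := θ.injective.ne fun h => htwo (by linear_combination h)
    linear_combination add_eq_two_mul_of_circulantGraph_one_adj hnext hprev hne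
  refine ⟨θ 0, θ 1 - θ 0, ?_, fun x => ?_⟩
  · rcases eq_add_one_or_eq_sub_one_of_circulantGraph_one_adj
      (θ.map_adj_iff.2 (circulantGraph_one_adj_add_one (0 : ZMod m))) with h | h <;>
      simp only [zero_add] at h <;> [left; right] <;> linear_combination h
  · have key (k : ℕ) : θ k = θ 0 + (θ 1 - θ 0) * k ∧
        θ (k + 1) = θ 0 + (θ 1 - θ 0) * (k + 1) := by
      induction k with
      | zero => simp
      | succ k ih =>
        push_cast
        refine ⟨ih.2, ?_⟩
        rw [hstep, ih.1, ih.2]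
        ring
    simpa using (key x.val).1

theorem eq_zero_and_eq_one_of_mapsTo_zero_one_three (hm : 6 ≤ m) {a ε : ZMod m}
    (hε : ε = 1 ∨ ε = -1) (h : Set.MapsTo (fun x => a + ε * x) {0, 1, 3} {0, 1, 3}) :
    a = 0 ∧ ε = 1 := by
  have hk (k : ℕ) (h0 : 0 < k) (h6 : k < 6) : (k : ZMod m) ≠ 0 :=
    ZMod.natCast_ne_zero_of_pos_of_lt h0 (by omega)
  have h1 : (1 : ZMod m) ≠ 0 := by exact_mod_cast hk 1 (by norm_num) (by norm_num)
  have h2 : (2 : ZMod m) ≠ 0 := by exact_mod_cast hk 2 (by norm_num) (by norm_num)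
  have h3 : (3 : ZMod m) ≠ 0 := by exact_mod_cast hk 3 (by norm_num) (by norm_num)
  have h4 : (4 : ZMod m) ≠ 0 := by exact_mod_cast hk 4 (by norm_num) (by norm_num)
  have h5 : (5 : ZMod m) ≠ 0 := by exact_mod_cast hk 5 (by norm_num) (by norm_num)
  have ha : a + ε * 0 ∈ ({0, 1, 3} : Set (ZMod m)) := h (by simp)
  have ha1 : a + ε * 1 ∈ ({0, 1, 3} : Set (ZMod m)) := h (by simp)
  have ha3 : a + ε * 3 ∈ ({0, 1, 3} : Set (ZMod m)) := h (by simp)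
  simp only [Set.mem_insert_iff, Set.mem_singleton_iff, mul_zero, add_zero] at ha ha1 ha3
  rcases hε with rfl | rfl <;> rcases ha with rfl | rfl | rfl
  · exact ⟨rfl, rfl⟩
  all_goals exfalso
  all_goals rcases ha1 with e | e | e <;> rcases ha3 with e' | e' | e'
  -- each remaining case equates a numeral `k` with `0 < |k| < 6` to `0`
  all_goals first
    | exact h1 (by linear_combination e) | exact h1 (by linear_combination -e)
    | exact h2 (by linear_combination e) | exact h2 (by linear_combination -e)
    | exact h3 (by linear_combination e) | exact h3 (by linear_combination -e)
    | exact h4 (by linear_combination e) | exact h4 (by linear_combination -e)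
    | exact h5 (by linear_combination e') | exact h5 (by linear_combination -e')
    | exact h2 (by linear_combination e') | exact h2 (by linear_combination -e')
    | exact h3 (by linear_combination e') | exact h3 (by linear_combination -e')

end ZModCycle

theorem SimpleGraph.IsCycles.adj_iff_circulantGraph_one_adj {W : Type*} {H : SimpleGraph W}
    {m : ℕ} (hm : 3 ≤ m) (hcyc : H.IsCycles) {f : ZMod m → W} (hf : f.Injective)
    (hnext : ∀ i, H.Adj (f i) (f (i + 1))) (i j : ZMod m) :
    H.Adj (f i) (f j) ↔ (𝒞 m).Adj i j := by
  have hprev (i : ZMod m) : H.Adj (f i) (f (i - 1)) := by simpa using (hnext (i - 1)).symm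
  simp only [circulantGraph_adj, Set.mem_singleton_iff]
  constructor
  · intro hij
    refine ⟨fun h => hij.ne (congrArg f h), ?_⟩
    by_cases hj : f j = f (i + 1)
    · obtain rfl := hf hj
      right; abel
    · have htwo : (2 : ZMod m) ≠ 0 := by
        exact_mod_cast ZMod.natCast_ne_zero_of_pos_of_lt two_pos hm
      have hne : f (i + 1) ≠ f (i - 1) := hf.ne fun h => htwo (by linear_combination h)
      obtain rfl := hf <|
        (hcyc.existsUnique_ne_adj (hnext i)).unique ⟨Ne.symm hj, hij⟩ ⟨hne, hprev i⟩
      left; abel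
  · rintro ⟨-, h | h⟩
    · rw [show j = i - 1 by rw [← h]; abel]; exact hprev i
    · rw [show j = i + 1 by rw [← h]; abel]; exact hnext i

theorem SimpleGraph.IsCycles.nonempty_iso_circulantGraph {W : Type*} [Finite W]
    {H : SimpleGraph W} (hcyc : H.IsCycles) (hconn : H.Connected) {v : W}
    (hv : (H.neighborSet v).Nonempty) : Nonempty (𝒞 (Nat.card W) ≃g H) := by
  obtain ⟨p, hp, hverts⟩ := hcyc.exists_cycle_toSubgraph_verts_eq_connectedComponentSupp
    (c := H.connectedComponentMk v) rfl hv
  have hsupp (w : W) : w ∈ p.support := by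
    rw [← Walk.mem_verts_toSubgraph, hverts, ConnectedComponent.mem_supp_iff,
      ConnectedComponent.eq]
    exact hconn.preconnected w v
  have hlen := hp.three_le_length
  have : Fact (1 < p.length) := ⟨by omega⟩
  have hmod (k : ℕ) (hk : k ≤ p.length) : p.getVert (k % p.length) = p.getVert k := by
    rcases hk.lt_or_eq with hk | rfl
    · rw [Nat.mod_eq_of_lt hk]
    · rw [Nat.mod_self, Walk.getVert_zero, Walk.getVert_length]
  let f : ZMod p.length → W := fun i => p.getVert i.val
  have hinj : f.Injective := fun i j h =>
    ZMod.val_injective _ (hp.getVert_injOn' (by simp; have := i.val_lt; omega)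
      (by simp; have := j.val_lt; omega) h)
  have hsurj : f.Surjective := fun w => by
    obtain ⟨k, rfl, hk⟩ := Walk.mem_support_iff_exists_getVert.1 (hsupp w)
    exact ⟨k, by simp only [f, ZMod.val_natCast, hmod k hk]⟩
  have hnext (i : ZMod p.length) : H.Adj (f i) (f (i + 1)) := by
    simp only [f, ZMod.val_add, ZMod.val_one, hmod _ (ZMod.val_lt i)]
    exact p.adj_getVert_succ i.val_lt
  rw [(Nat.card_eq_of_bijective f ⟨hinj, hsurj⟩).symm.trans (Nat.card_zmod _)]
  exact ⟨⟨Equiv.ofBijective f ⟨hinj, hsurj⟩,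
    hcyc.adj_iff_circulantGraph_one_adj hlen hinj hnext _ _⟩⟩

theorem IsDistinguishingVertexColoring.comp_iso {W W' α : Type*} {H : SimpleGraph W}
    {H' : SimpleGraph W'} {c : W → α} (hc : IsDistinguishingVertexColoring H c)
    (κ : H' ≃g H) :
    IsDistinguishingVertexColoring H' (c ∘ κ) := fun θ hθ x => by
  simpa using hc (κ.symm.trans (θ.trans κ)) (fun y => by simpa using hθ (κ.symm y)) (κ x)

theorem exists_distinguishing_two_coloring_circulantGraph_one {m : ℕ} (hm : 6 ≤ m) :
    ∃ c : ZMod m → Fin 2, IsDistinguishingVertexColoring (𝒞 m) c := by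
  classical
  refine ⟨fun x => if x ∈ ({0, 1, 3} : Set (ZMod m)) then 0 else 1, fun θ hθ x => ?_⟩
  obtain ⟨a, ε, hε, hθa⟩ := exists_affine_of_circulantGraph_one_iso (by omega) θ
  have hT : Set.MapsTo (fun x => a + ε * x) {0, 1, 3} {0, 1, 3} := fun y hy => by
    have h := hθ y
    simp only [hθa, if_pos hy] at h
    exact of_not_not fun hn => by simp [hn] at h
  obtain ⟨rfl, rfl⟩ := eq_zero_and_eq_one_of_mapsTo_zero_one_three hm hε hT
  simp [hθa]

theorem SimpleGraph.Reachable.iff_of_forall_adj {W : Type*} {H : SimpleGraph W} {P : W → Prop}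
    (hP : ∀ x y, H.Adj x y → (P x ↔ P y)) {x y : W} (h : H.Reachable x y) : P x ↔ P y := by
  obtain ⟨p⟩ := h
  induction p with
  | nil => rfl
  | cons hadj _ ih => exact (hP _ _ hadj).trans ih

section Subdivision

variable {V V' : Type*} {G : SimpleGraph V} {G' : SimpleGraph V'}

@[simp]
theorem subdivisionGraph_adj_inl_inr {v : V} {e : G.edgeSet} :
    (subdivisionGraph G).Adj (inl v) (inr e) ↔ v ∈ (e : Sym2 V) := by
  simp [subdivisionGraph]

@[simp]
theorem subdivisionGraph_adj_inr_inl {v : V} {e : G.edgeSet} :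
    (subdivisionGraph G).Adj (inr e) (inl v) ↔ v ∈ (e : Sym2 V) := by
  simp [subdivisionGraph]

@[simp]
theorem not_subdivisionGraph_adj_inl_inl {u v : V} :
    ¬(subdivisionGraph G).Adj (inl u) (inl v) := by
  simp [subdivisionGraph]

@[simp]
theorem not_subdivisionGraph_adj_inr_inr {e f : G.edgeSet} :
    ¬(subdivisionGraph G).Adj (inr e) (inr f) := by
  simp [subdivisionGraph]

theorem subdivisionGraph_isLeft_eq_not_of_adj {x y : V ⊕ G.edgeSet}
    (h : (subdivisionGraph G).Adj x y) : x.isLeft = !y.isLeft := by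
  rcases x with u | e <;> rcases y with v | f <;> simp_all

theorem subdivisionGraph_reachable_inl {u v : V} (h : G.Reachable u v) :
    (subdivisionGraph G).Reachable (inl u) (inl v) := by
  refine (h.iff_of_forall_adj (P := fun w => (subdivisionGraph G).Reachable (inl u) (inl w))
    fun a b hab => ?_).1 .rfl
  have ha : (subdivisionGraph G).Adj (inl a) (inr ⟨s(a, b), hab⟩) := by simp
  have hb : (subdivisionGraph G).Adj (inr ⟨s(a, b), hab⟩) (inl b) := by simp
  have hab' := ha.reachable.trans hb.reachable
  exact ⟨fun h => h.trans hab', fun h => h.trans hab'.symm⟩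

theorem subdivisionGraph_connected (hconn : G.Connected) : (subdivisionGraph G).Connected := by
  obtain ⟨v₀⟩ := hconn.nonempty
  have hreach : ∀ x, (subdivisionGraph G).Reachable x (inl v₀) := by
    rintro (u | e)
    · exact subdivisionGraph_reachable_inl (hconn.preconnected u v₀)
    · have he : (subdivisionGraph G).Adj (inr e) (inl (e : Sym2 V).out.1) := by
        simpa using Sym2.out_fst_mem _
      exact he.reachable.trans (subdivisionGraph_reachable_inl (hconn.preconnected _ v₀))
  exact { preconnected := fun x y => (hreach x).trans (hreach y).symm, nonempty := ⟨inl v₀⟩ }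

theorem subdivisionGraph_preservesSides_or_swapsSides (hconn : G.Connected)
    (ψ : subdivisionGraph G ≃g subdivisionGraph G) :
    (∀ x, (ψ x).isLeft = x.isLeft) ∨ ∀ x, (ψ x).isLeft = !x.isLeft := by
  have hP : ∀ x y, (subdivisionGraph G).Adj x y →
      ((ψ x).isLeft = x.isLeft ↔ (ψ y).isLeft = y.isLeft) := fun x y h => by
    rw [subdivisionGraph_isLeft_eq_not_of_adj h,
      subdivisionGraph_isLeft_eq_not_of_adj (ψ.map_adj_iff.2 h), Bool.not_inj_iff]
  have hconst x y := (subdivisionGraph_connected hconn).preconnected x y |>.iff_of_forall_adj hP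
  obtain ⟨v₀⟩ := hconn.nonempty
  by_cases h₀ : (ψ (inl v₀)).isLeft = (inl v₀ : V ⊕ G.edgeSet).isLeft
  · exact .inl fun x => (hconst x (inl v₀)).2 h₀
  · exact .inr fun x => Bool.eq_not_of_ne fun h => h₀ ((hconst x (inl v₀)).1 h)

theorem subdivisionGraph_isLeft_mul_self (hconn : G.Connected)
    (ψ : subdivisionGraph G ≃g subdivisionGraph G) (x : V ⊕ G.edgeSet) :
    ((ψ * ψ) x).isLeft = x.isLeft := by
  rcases subdivisionGraph_preservesSides_or_swapsSides hconn ψ with h | h <;>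
    simp [RelIso.mul_apply, h]

def SimpleGraph.Iso.subdivisionGraph (φ : G ≃g G') :
    subdivisionGraph G ≃g subdivisionGraph G' where
  toEquiv := Equiv.sumCongr φ.toEquiv φ.mapEdgeSet
  map_rel_iff' := by rintro (u | e) (v | f) <;> simp

theorem SimpleGraph.Iso.subdivisionGraph_apply_eq_self {φ : G ≃g G} (hφ : ∀ v, φ v = v)
    (x : V ⊕ G.edgeSet) : φ.subdivisionGraph x = x := by
  have : ⇑φ = id := funext hφ
  rcases x with v | ⟨e, he⟩
  · exact congrArg inl (hφ v)
  · exact congrArg inr (Subtype.ext (show Sym2.map φ e = e by rw [this, Sym2.map_id, id]))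

theorem subdivisionGraph_exists_adj_inl_inl_iff {u v : V} (huv : u ≠ v) :
    (∃ x, (subdivisionGraph G).Adj (inl u) x ∧ (subdivisionGraph G).Adj (inl v) x) ↔
      G.Adj u v := by
  constructor
  · rintro ⟨u' | ⟨e, he⟩, hu, hv⟩
    · simp at hu
    · simp only [subdivisionGraph_adj_inl_inr] at hu hv
      rwa [(Sym2.mem_and_mem_iff huv).1 ⟨hu, hv⟩] at he
  · exact fun h => ⟨inr ⟨s(u, v), h⟩, by simp, by simp⟩

theorem subdivisionGraph_eq_of_adj_inl_inl {u v : V} (huv : u ≠ v) {x y : V ⊕ G.edgeSet}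
    (hxu : (subdivisionGraph G).Adj (inl u) x) (hxv : (subdivisionGraph G).Adj (inl v) x)
    (hyu : (subdivisionGraph G).Adj (inl u) y) (hyv : (subdivisionGraph G).Adj (inl v) y) :
    x = y := by
  rcases x with _ | ⟨e, he⟩
  · simp at hxu
  rcases y with _ | ⟨f, hf⟩
  · simp at hyu
  simp only [subdivisionGraph_adj_inl_inr] at hxu hxv hyu hyv
  exact congrArg inr (Subtype.ext ((Sym2.mem_and_mem_iff huv).1 ⟨hxu, hxv⟩ |>.trans
    ((Sym2.mem_and_mem_iff huv).1 ⟨hyu, hyv⟩).symm))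

theorem exists_iso_apply_inl_of_isLeft_eq (ψ : subdivisionGraph G ≃g subdivisionGraph G')
    (hψ : ∀ x, (ψ x).isLeft = x.isLeft) :
    ∃ φ : G ≃g G', ∀ v, ψ (inl v) = inl (φ v) := by
  have hψ' : ∀ x, (ψ.symm x).isLeft = x.isLeft := fun x => by
    simpa using (hψ (ψ.symm x)).symm
  choose f hf using fun v => Sum.isLeft_iff.1 ((hψ (inl v)).trans isLeft_inl)
  choose g hg using fun v => Sum.isLeft_iff.1 ((hψ' (inl v)).trans isLeft_inl)
  have hgf (v : V) : g (f v) = v := inl_injective (by rw [← hg, ← hf, ψ.symm_apply_apply])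
  have hfg (v : V') : f (g v) = v := inl_injective (by rw [← hf, ← hg, ψ.apply_symm_apply])
  refine ⟨⟨⟨f, g, hgf, hfg⟩, fun {u v} => ?_⟩, hf⟩
  show G'.Adj (f u) (f v) ↔ G.Adj u v
  rcases eq_or_ne u v with rfl | huv
  · simp
  have hfuv : f u ≠ f v := fun h => huv (by rw [← hgf u, h, hgf v])
  rw [← subdivisionGraph_exists_adj_inl_inl_iff huv,
    ← subdivisionGraph_exists_adj_inl_inl_iff hfuv, ← hf, ← hf, ψ.surjective.exists]
  simp only [ψ.map_adj_iff]

theorem exists_eq_subdivisionGraph_of_isLeft_eq (ψ : subdivisionGraph G ≃g subdivisionGraph G')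
    (hψ : ∀ x, (ψ x).isLeft = x.isLeft) : ∃ φ : G ≃g G', ψ = φ.subdivisionGraph := by
  obtain ⟨φ, hφ⟩ := exists_iso_apply_inl_of_isLeft_eq ψ hψ
  refine ⟨φ, RelIso.ext ?_⟩
  rintro (v | ⟨e, he⟩)
  · exact hφ v
  induction e using Sym2.ind with
  | _ u v =>
  have huv : u ≠ v := G.ne_of_adj he
  -- both images are the unique common neighbour of `inl (φ u)` and `inl (φ v)`
  have hadj (χ : subdivisionGraph G ≃g subdivisionGraph G')
      (hχ : ∀ v, χ (inl v) = inl (φ v)) (w : V) (hw : w ∈ s(u, v)) :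
      (subdivisionGraph G').Adj (inl (φ w)) (χ (inr ⟨s(u, v), he⟩)) := by
    rw [← hχ, χ.map_adj_iff]; simpa using hw
  exact subdivisionGraph_eq_of_adj_inl_inl (φ.injective.ne huv)
    (hadj ψ hφ u (Sym2.mem_mk_left u v)) (hadj ψ hφ v (Sym2.mem_mk_right u v))
    (hadj φ.subdivisionGraph (fun _ => rfl) u (Sym2.mem_mk_left u v))
    (hadj φ.subdivisionGraph (fun _ => rfl) v (Sym2.mem_mk_right u v))

end Subdivision

def IsDistinguishingTotalColoring {V α : Type*} (G : SimpleGraph V) (cV : V → α)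
    (cE : G.edgeSet → α) : Prop :=
  ∀ φ : G ≃g G,
    ((∀ v, cV (φ v) = cV v) ∧ (∀ e, cE (φ.mapEdgeSet e) = cE e)) → ∀ v, φ v = v

section TotalColoring

variable {V α : Type*} {G : SimpleGraph V}

theorem IsDistinguishingVertexColoring.restrict_subdivisionGraph {c : V ⊕ G.edgeSet → α}
    (hc : IsDistinguishingVertexColoring (subdivisionGraph G) c) :
    IsDistinguishingTotalColoring G (c ∘ inl) (c ∘ inr) := fun φ ⟨hV, hE⟩ v =>
  inl_injective <| hc φ.subdivisionGraph (by rintro (u | e); exacts [hV u, hE e]) (inl v)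

theorem IsDistinguishingTotalColoring.sumElim {cV : V → α} {cE : G.edgeSet → α}
    (hc : IsDistinguishingTotalColoring G cV cE)
    (hsides : ∀ (ψ : subdivisionGraph G ≃g subdivisionGraph G) x, (ψ x).isLeft = x.isLeft) :
    IsDistinguishingVertexColoring (subdivisionGraph G) (Sum.elim cV cE) := fun ψ hψ => by
  obtain ⟨φ, rfl⟩ := exists_eq_subdivisionGraph_of_isLeft_eq ψ (hsides ψ)
  exact φ.subdivisionGraph_apply_eq_self (hc φ ⟨fun v => hψ (inl v), fun e => hψ (inr e)⟩)

theorem IsDistinguishingTotalColoring.two_le {d : ℕ} {cV : V → Fin d} {cE : G.edgeSet → Fin d}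
    (hc : IsDistinguishingTotalColoring G cV cE) {φ : G ≃g G} {v : V} (hφv : φ v ≠ v) :
    2 ≤ d := by
  by_contra! hd
  interval_cases d
  · exact (cV v).elim0
  · exact hφv (hc φ ⟨fun _ => Subsingleton.elim _ _, fun _ => Subsingleton.elim _ _⟩ v)

end TotalColoring

section SideSwapping

variable {V : Type*} {G : SimpleGraph V} {ψ : subdivisionGraph G ≃g subdivisionGraph G}

theorem subdivisionGraph_ncard_neighborSet_of_swapsSides (hψ : ∀ x, (ψ x).isLeft = !x.isLeft)
    (x : V ⊕ G.edgeSet) : ((subdivisionGraph G).neighborSet x).ncard = 2 := by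
  have hedge (e : G.edgeSet) : ((subdivisionGraph G).neighborSet (inr e)).ncard = 2 := by
    obtain ⟨e, he⟩ := e
    induction e using Sym2.ind with
    | _ u v =>
    rw [show (subdivisionGraph G).neighborSet (inr ⟨s(u, v), he⟩) = {inl u, inl v} by
      ext (w | f) <;> simp [eq_comm]]
    exact Set.ncard_pair (inl_injective.ne (G.ne_of_adj he))
  rcases x with v | e
  · obtain ⟨e, he⟩ := Sum.isRight_iff.1 (by simpa using hψ (inl v))
    rw [← hedge e, ← he, ← ψ.image_neighborSet, Set.ncard_image_of_injective _ ψ.injective]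
  · exact hedge e

variable [Finite V]

theorem six_le_card_of_swapsSides (hcard : 3 ≤ Nat.card V)
    (hψ : ∀ x, (ψ x).isLeft = !x.isLeft) : 6 ≤ Nat.card (V ⊕ G.edgeSet) := by
  choose f hf using fun v => Sum.isRight_iff.1 (by simpa using hψ (inl v))
  have hf_inj : f.Injective := fun u v h => inl_injective (ψ.injective (by rw [hf, hf, h]))
  have := Nat.card_le_card_of_injective f hf_inj
  rw [Nat.card_sum]
  omega

theorem subdivisionGraph_nonempty_iso_cycle_of_swapsSides (hconn : G.Connected)
    (hψ : ∀ x, (ψ x).isLeft = !x.isLeft) :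
    Nonempty (𝒞 (Nat.card (V ⊕ G.edgeSet)) ≃g subdivisionGraph G) := by
  obtain ⟨v⟩ := hconn.nonempty
  have hdeg := subdivisionGraph_ncard_neighborSet_of_swapsSides hψ
  exact IsCycles.nonempty_iso_circulantGraph (fun x _ => hdeg x) (subdivisionGraph_connected hconn)
    (v := inl v) (Set.nonempty_of_ncard_ne_zero (by rw [hdeg]; norm_num))

theorem exists_distinguishing_two_coloring_of_swapsSides (hconn : G.Connected)
    (hcard : 3 ≤ Nat.card V) (hψ : ∀ x, (ψ x).isLeft = !x.isLeft) :
    ∃ c : V ⊕ G.edgeSet → Fin 2, IsDistinguishingVertexColoring (subdivisionGraph G) c := by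
  obtain ⟨κ⟩ := subdivisionGraph_nonempty_iso_cycle_of_swapsSides hconn hψ
  obtain ⟨c, hc⟩ :=
    exists_distinguishing_two_coloring_circulantGraph_one (six_le_card_of_swapsSides hcard hψ)
  exact ⟨c ∘ κ.symm, hc.comp_iso κ.symm⟩

theorem exists_iso_apply_ne_of_swapsSides (hconn : G.Connected) (hcard : 3 ≤ Nat.card V)
    (hψ : ∀ x, (ψ x).isLeft = !x.isLeft) : ∃ φ : G ≃g G, ∃ v, φ v ≠ v := by
  obtain ⟨κ⟩ := subdivisionGraph_nonempty_iso_cycle_of_swapsSides hconn hψ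
  let ρ := κ.symm.trans ((circulantGraphAddRight _ 1).trans κ)
  have hρ (i : ZMod _) : ρ (κ i) = κ (i + 1) := by simp [ρ]
  -- `ρ * ρ` preserves the sides, so it comes from `G`; it moves `κ 0` to `κ 2`
  obtain ⟨φ, hφ⟩ :=
    exists_eq_subdivisionGraph_of_isLeft_eq (ρ * ρ) (subdivisionGraph_isLeft_mul_self hconn ρ)
  by_contra! hid
  have h := φ.subdivisionGraph_apply_eq_self (hid φ) (κ 0)
  rw [← hφ, RelIso.mul_apply, hρ, hρ] at h
  have htwo := ZMod.natCast_ne_zero_of_pos_of_lt two_pos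
    (six_le_card_of_swapsSides hcard hψ |>.trans_lt' (by norm_num))
  exact htwo (by push_cast; linear_combination κ.injective h)

end SideSwapping

/-- For a finite simple connected graph `G` of order `≥ 3`,
`D''(G) = D(S(G))`. -/
theorem totalDistinguishingNumber_eq_distinguishingNumber_subdivision
    {V : Type*} [Fintype V] (G : SimpleGraph V)
    (hconn : G.Connected) (hcard : 3 ≤ Fintype.card V) :
    totalDistinguishingNumber G = distinguishingNumber (subdivisionGraph G) := by
  rw [← Nat.card_eq_fintype_card] at hcard
  set S :=
    {r | ∃ c : V ⊕ G.edgeSet → Fin r, IsDistinguishingVertexColoring (subdivisionGraph G) c}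
  have hST : S ⊆ {d | ∃ cV cE, IsDistinguishingTotalColoring G cV cE} :=
    fun r ⟨c, hc⟩ => ⟨_, _, hc.restrict_subdivisionGraph⟩
  have hS : S.Nonempty :=
    ⟨_, Finite.equivFin _, fun _ hψ x => (Finite.equivFin _).injective (hψ x)⟩
  refine le_antisymm (csInf_le_csInf (OrderBot.bddBelow _) hS hST) (le_csInf (hS.mono hST) ?_)
  rintro d ⟨cV, cE, hc : IsDistinguishingTotalColoring G cV cE⟩
  by_cases hsides :
      ∀ (ψ : subdivisionGraph G ≃g subdivisionGraph G) x, (ψ x).isLeft = x.isLeft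
  · exact Nat.sInf_le ⟨_, hc.sumElim hsides⟩
  push Not at hsides
  obtain ⟨ψ, x, hx⟩ := hsides
  have hψ :=
    (subdivisionGraph_preservesSides_or_swapsSides hconn ψ).resolve_left fun h => hx (h x)
  obtain ⟨φ, v, hφv⟩ := exists_iso_apply_ne_of_swapsSides hconn hcard hψ
  exact (Nat.sInf_le (exists_distinguishing_two_coloring_of_swapsSides hconn hcard hψ)).trans
    (hc.two_le hφv)
end

section
/- Let G be a finite simple connected graph of order n ≥ 3. Then the total distinguishing number of G is at most the distinguishing number of its subdivision graph: D''(G) ≤ D(S(G)). -/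
open SimpleGraph

/-- For a finite simple connected graph `G` of order `≥ 3`,
`D''(G) ≤ D(S(G))`. -/
theorem totalDistinguishingNumber_le_distinguishingNumber_subdivision
    {V : Type*} [Fintype V] (G : SimpleGraph V)
    (hconn : G.Connected) (hcard : 3 ≤ Fintype.card V) :
    totalDistinguishingNumber G ≤ distinguishingNumber (subdivisionGraph G) := by
  classical
  haveI : Fintype (V ⊕ G.edgeSet) := Fintype.ofFinite _
  have hAne : {r | ∃ c : (V ⊕ G.edgeSet) → Fin r,
      IsDistinguishingVertexColoring (subdivisionGraph G) c}.Nonempty := by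
    refine ⟨Fintype.card (V ⊕ G.edgeSet), ⇑(Fintype.equivFin _), ?_⟩
    intro φ h v
    exact (Fintype.equivFin _).injective (h v)
  obtain ⟨c, hc⟩ := Nat.sInf_mem hAne
  apply Nat.sInf_le
  refine ⟨fun v => c (Sum.inl v), fun e => c (Sum.inr e), ?_⟩
  rintro φ ⟨hV, hE⟩ v
  have hmem : ∀ (w : V) (e : G.edgeSet),
      φ w ∈ ((φ.mapEdgeSet e : G.edgeSet) : Sym2 V) ↔ w ∈ (e : Sym2 V) := by
    intro w e
    have : ((φ.mapEdgeSet e : G.edgeSet) : Sym2 V) = Sym2.map φ (e : Sym2 V) := rfl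
    rw [this, Sym2.mem_map]
    constructor
    · rintro ⟨a, ha, haw⟩
      rwa [φ.toEquiv.injective haw] at ha
    · intro hw
      exact ⟨w, hw, rfl⟩
  let Φ : subdivisionGraph G ≃g subdivisionGraph G :=
    { toEquiv := Equiv.sumCongr φ.toEquiv φ.mapEdgeSet
      map_rel_iff' := by
        rintro (a | a) (b | b) <;>
          simp only [Equiv.sumCongr_apply, Sum.map_inl, Sum.map_inr, subdivisionGraph,
            SimpleGraph.fromRel_adj, ne_eq, Sum.inl.injEq, Sum.inr.injEq, reduceCtorEq,
            not_false_eq_true, true_and, or_false, false_or, and_false, false_and,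
            hmem, RelIso.coe_fn_toEquiv] <;> tauto }
  have hpres : ∀ x, c (Φ x) = c x := by
    rintro (w | e)
    · exact hV w
    · exact hE e
  have := hc Φ hpres (Sum.inl v)
  simpa [Φ] using this
end

section
/- Let G be a finite simple connected graph of order n ≥ 3 that is not isomorphic to a cycle Cₙ for any n. Then the distinguishing number of the subdivision graph of G is at most the total distinguishing number of G: D(S(G)) ≤ D''(G). -/
open SimpleGraph

/-!
Colour `S(G)` by an optimal total distinguishing colouring of `G`: a vertex `v` of `S(G)` gets
the colour of `v`, a subdivision vertex `e` that of the edge `e`. Since `S(G)` is connected and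
all its edges join `V(G)` to `E(G)`, an automorphism of `S(G)` either preserves both sides or
swaps them. If it preserves them, it is induced by an automorphism of `G` preserving the total
colouring, hence is trivial. If it swaps them, every vertex of `G` has the degree of a subdivision
vertex, namely `2`, and a connected finite `2`-regular graph is a cycle.
-/

namespace SimpleGraph

variable {V W : Type*} {G : SimpleGraph V} {H : SimpleGraph W}

lemma Reachable.iff_of_forall_adj_s7 {P : V → Prop} (hP : ∀ x y, G.Adj x y → (P x ↔ P y))
    {x y : V} (h : G.Reachable x y) : P x ↔ P y := by
  obtain ⟨p⟩ := h
  induction p with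
  | nil => rfl
  | cons ha _ ih => exact (hP _ _ ha).trans ih

lemma Copy.image_neighborSet_eq [Finite W] (f : G.Copy H) {v : V}
    (hdeg : (H.neighborSet (f v)).ncard ≤ (G.neighborSet v).ncard) :
    f '' G.neighborSet v = H.neighborSet (f v) :=
  Set.eq_of_subset_of_ncard_le (f.toHom.image_neighborSet_subset v)
    (by rwa [Set.ncard_image_of_injective (f := f) _ f.injective])

lemma Copy.nonempty_iso_of_ncard_neighborSet_le [Finite W] [Nonempty V] (f : G.Copy H)
    (hH : H.Preconnected) (hdeg : ∀ v, (H.neighborSet (f v)).ncard ≤ (G.neighborSet v).ncard) :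
    Nonempty (G ≃g H) := by
  have hnbr := fun v => f.image_neighborSet_eq (hdeg v)
  have hclosed : ∀ x y, H.Adj x y → x ∈ Set.range f → y ∈ Set.range f := by
    rintro x y hxy ⟨v, rfl⟩
    obtain ⟨w, -, rfl⟩ : y ∈ f '' G.neighborSet v := (hnbr v).symm ▸ hxy
    exact ⟨w, rfl⟩
  have hsurj : Function.Surjective f := fun y =>
    ((hH (f (Classical.arbitrary V)) y).iff_of_forall_adj_s7
      (fun x y hxy => ⟨hclosed x y hxy, hclosed y x hxy.symm⟩)).mp ⟨_, rfl⟩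
  refine ⟨⟨Equiv.ofBijective f ⟨f.injective, hsurj⟩, fun {v w} => ⟨fun h => ?_, f.toHom.map_adj⟩⟩⟩
  obtain ⟨w', hw', hfw⟩ : f w ∈ f '' G.neighborSet v := (hnbr v).symm ▸ h
  rwa [← f.injective hfw]

lemma ncard_neighborSet_cycleGraph {n : ℕ} (v : Fin (n + 3)) :
    ((cycleGraph (n + 3)).neighborSet v).ncard = 2 := by
  rw [cycleGraph_neighborSet, Set.ncard_pair]
  simp only [ne_eq, sub_eq_iff_eq_add, add_assoc v, left_eq_add]
  exact ne_of_beq_false rfl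

theorem Connected.exists_nonempty_iso_cycleGraph [Finite V] (hG : G.Connected)
    (hdeg : ∀ v, (G.neighborSet v).ncard = 2) : ∃ n, Nonempty (cycleGraph n ≃g G) := by
  obtain ⟨v⟩ := hG.nonempty
  have hcyc : G.IsCycles := fun v _ => hdeg v
  obtain ⟨p, hp, -⟩ := hcyc.exists_cycle_toSubgraph_verts_eq_connectedComponentSupp
    (c := G.connectedComponentMk v) rfl (Set.nonempty_of_ncard_ne_zero (by simp [hdeg]))
  obtain ⟨f⟩ := (cycleGraph_isContained_iff hp.three_le_length).mpr ⟨v, p, hp, rfl⟩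
  obtain ⟨n, hn⟩ : ∃ n, p.length = n + 3 := ⟨p.length - 3, by have := hp.three_le_length; omega⟩
  rw [hn] at f
  exact ⟨n + 3, f.nonempty_iso_of_ncard_neighborSet_le hG.preconnected
    fun v => by rw [hdeg, ncard_neighborSet_cycleGraph]⟩

end SimpleGraph

namespace subdivisionGraph

open Sum

variable {V : Type*} {G : SimpleGraph V}

@[simp] lemma adj_inl_inr {v : V} {e : G.edgeSet} :
    (subdivisionGraph G).Adj (inl v) (inr e) ↔ v ∈ (e : Sym2 V) := by
  simp [subdivisionGraph]

@[simp] lemma adj_inr_inl {v : V} {e : G.edgeSet} :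
    (subdivisionGraph G).Adj (inr e) (inl v) ↔ v ∈ (e : Sym2 V) := by
  simp [subdivisionGraph]

@[simp] lemma not_adj_inl_inl {u v : V} : ¬(subdivisionGraph G).Adj (inl u) (inl v) := by
  simp [subdivisionGraph]

@[simp] lemma not_adj_inr_inr {e f : G.edgeSet} : ¬(subdivisionGraph G).Adj (inr e) (inr f) := by
  simp [subdivisionGraph]

lemma isLeft_ne_of_adj {x y : V ⊕ G.edgeSet} (h : (subdivisionGraph G).Adj x y) :
    x.isLeft ≠ y.isLeft := by
  cases x <;> cases y <;> simp_all

lemma reachable_inl_of_adj {u v : V} (h : G.Adj u v) :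
    (subdivisionGraph G).Reachable (inl u) (inl v) :=
  have huv : (subdivisionGraph G).Adj (inl u) (inr ⟨s(u, v), h⟩) := by simp
  have hvu : (subdivisionGraph G).Adj (inr ⟨s(u, v), h⟩) (inl v) := by simp
  huv.reachable.trans hvu.reachable

lemma reachable_inl {u v : V} (h : G.Reachable u v) :
    (subdivisionGraph G).Reachable (inl u) (inl v) := by
  obtain ⟨p⟩ := h
  induction p with
  | nil => rfl
  | cons h _ ih => exact (reachable_inl_of_adj h).trans ih

lemma preconnected (hG : G.Preconnected) : (subdivisionGraph G).Preconnected := by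
  have hreach_vertex : ∀ x, ∃ v, (subdivisionGraph G).Reachable x (inl v) := by
    rintro (v | ⟨e, he⟩)
    · exact ⟨v, .rfl⟩
    · induction e using Sym2.ind with
      | _ u v => exact ⟨u, Adj.reachable (by simp)⟩
  intro x y
  obtain ⟨u, hu⟩ := hreach_vertex x
  obtain ⟨v, hv⟩ := hreach_vertex y
  exact hu.trans ((reachable_inl (hG u v)).trans hv.symm)

lemma forall_isLeft_apply_eq_or_forall_ne (hG : G.Preconnected)
    (φ : subdivisionGraph G ≃g subdivisionGraph G) :
    (∀ x, (φ x).isLeft = x.isLeft) ∨ ∀ x, (φ x).isLeft ≠ x.isLeft := by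
  have hinv : ∀ x y, (subdivisionGraph G).Adj x y →
      ((φ x).isLeft = x.isLeft ↔ (φ y).isLeft = y.isLeft) := fun x y h => by
    have := isLeft_ne_of_adj h
    have := isLeft_ne_of_adj (φ.map_adj_iff.mpr h)
    grind
  by_contra! h
  obtain ⟨⟨x, hx⟩, ⟨y, hy⟩⟩ := h
  exact hx (((preconnected hG y x).iff_of_forall_adj_s7 hinv).mp hy)

lemma neighborSet_inl (v : V) :
    (subdivisionGraph G).neighborSet (inl v) = inr '' {e : G.edgeSet | v ∈ (e : Sym2 V)} := by
  ext (w | e) <;> simp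

lemma neighborSet_inr (e : G.edgeSet) :
    (subdivisionGraph G).neighborSet (inr e) = inl '' {v | v ∈ (e : Sym2 V)} := by
  ext (w | f) <;> simp

lemma ncard_neighborSet_inl (v : V) :
    ((subdivisionGraph G).neighborSet (inl v)).ncard = (G.neighborSet v).ncard := by
  classical
  rw [neighborSet_inl, Set.ncard_image_of_injective _ inr_injective, ← Nat.card_coe_set_eq,
    ← Nat.card_coe_set_eq]
  exact Nat.card_congr ((Equiv.subtypeSubtypeEquivSubtypeInter (· ∈ G.edgeSet) (v ∈ ·)).trans
    (G.incidenceSetEquivNeighborSet v))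

lemma ncard_neighborSet_inr (e : G.edgeSet) :
    ((subdivisionGraph G).neighborSet (inr e)).ncard = 2 := by
  obtain ⟨e, he⟩ := e
  induction e using Sym2.ind with
  | _ a b =>
    rw [neighborSet_inr, Set.ncard_image_of_injective _ inl_injective,
      show {v | v ∈ s(a, b)} = {a, b} by ext; simp, Set.ncard_pair (G.ne_of_adj he)]

lemma ncard_neighborSet_eq_two_of_isLeft_apply_ne (φ : subdivisionGraph G ≃g subdivisionGraph G)
    (hφ : ∀ x, (φ x).isLeft ≠ x.isLeft) (v : V) : (G.neighborSet v).ncard = 2 := by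
  obtain ⟨e, he⟩ : ∃ e, φ (inl v) = inr e := Sum.isRight_iff.mp (by simpa using hφ (inl v))
  rw [← ncard_neighborSet_inl, ← Nat.card_coe_set_eq, Nat.card_congr (φ.mapNeighborSet (inl v)),
    Nat.card_coe_set_eq, he, ncard_neighborSet_inr]

lemma adj_iff_ne_and_exists_adj {u v : V} :
    G.Adj u v ↔
      u ≠ v ∧ ∃ x, (subdivisionGraph G).Adj (inl u) x ∧ (subdivisionGraph G).Adj (inl v) x := by
  refine ⟨fun h => ⟨h.ne, inr ⟨s(u, v), h⟩, by simp, by simp⟩, ?_⟩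
  rintro ⟨huv, w | e, hu, hv⟩
  · simp at hu
  · rw [adj_inl_inr] at hu hv
    rw [← mem_edgeSet, ← (Sym2.mem_and_mem_iff huv).mp ⟨hu, hv⟩]
    exact e.2

lemma exists_iso_eq_sumMap_of_isLeft_apply_eq (φ : subdivisionGraph G ≃g subdivisionGraph G)
    (hφ : ∀ x, (φ x).isLeft = x.isLeft) : ∃ ψ : G ≃g G, ∀ x, φ x = Sum.map ψ ψ.mapEdgeSet x := by
  choose σ hσ using fun v => Sum.isLeft_iff.mp (by simpa using hφ (inl v))
  choose τ hτ using fun e => Sum.isRight_iff.mp (by simpa using hφ (inr e))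
  have hσ_bij : Function.Bijective σ := by
    refine ⟨fun u v h => inl_injective (φ.injective (by rw [hσ, hσ, h])), fun u => ?_⟩
    obtain ⟨v, hv⟩ := Sum.isLeft_iff.mp (by simpa using (hφ (φ.symm (inl u))).symm)
    exact ⟨v, inl_injective (by rw [← hσ, ← hv, RelIso.apply_symm_apply])⟩
  have hσ_adj : ∀ {a b}, G.Adj (σ a) (σ b) ↔ G.Adj a b := by
    intro a b
    rw [adj_iff_ne_and_exists_adj, adj_iff_ne_and_exists_adj, hσ_bij.injective.ne_iff, ← hσ, ← hσ,
      φ.surjective.exists]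
    simp only [φ.map_adj_iff]
  let ψ : G ≃g G := ⟨Equiv.ofBijective σ hσ_bij, hσ_adj⟩
  have hψ_edge : ∀ e, τ e = ψ.mapEdgeSet e := by
    rintro ⟨e, he⟩
    induction e using Sym2.ind with
    | _ a b =>
      have hmem : ∀ c ∈ s(a, b), σ c ∈ (τ ⟨s(a, b), he⟩ : Sym2 V) := fun c hc => by
        simpa [hσ, hτ] using φ.map_adj_iff.mpr ((adj_inl_inr (e := ⟨s(a, b), he⟩)).mpr hc)
      apply Subtype.ext
      rw [(Sym2.mem_and_mem_iff (hσ_bij.injective.ne (G.ne_of_adj he))).mp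
        ⟨hmem a (by simp), hmem b (by simp)⟩]
      rfl
  refine ⟨ψ, ?_⟩
  rintro (v | e)
  · exact hσ v
  · rw [hτ, hψ_edge]
    rfl

end subdivisionGraph

lemma exists_totalDistinguishingColoring {V : Type*} [Finite V] (G : SimpleGraph V) :
    ∃ (cV : V → Fin (totalDistinguishingNumber G))
      (cE : G.edgeSet → Fin (totalDistinguishingNumber G)),
      ∀ φ : G ≃g G, ((∀ v, cV (φ v) = cV v) ∧ ∀ e, cE (φ.mapEdgeSet e) = cE e) → ∀ v, φ v = v :=
  -- `s` is spelled out since unification cannot read it off `Fin (totalDistinguishingNumber G)`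
  Nat.sInf_mem (s := {d | ∃ (_ : V → Fin d) (_ : G.edgeSet → Fin d), _})
    ⟨Nat.card V + 1, fun v => (Finite.equivFin V v).castSucc, fun _ => 0,
      fun _ hφ v => (Finite.equivFin V).injective (Fin.castSucc_injective _ (hφ.1 v))⟩

theorem distinguishingNumber_subdivision_le_totalDistinguishingNumber_general
    {V : Type*} [Fintype V] (G : SimpleGraph V)
    (hconn : G.Connected)
    (hcyc : ∀ m : ℕ, IsEmpty (G ≃g cycleGraph m)) :
    distinguishingNumber (subdivisionGraph G) ≤ totalDistinguishingNumber G := by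
  obtain ⟨cV, cE, hc⟩ := exists_totalDistinguishingColoring G
  refine Nat.sInf_le ⟨Sum.elim cV cE, fun φ hφ => ?_⟩
  rcases subdivisionGraph.forall_isLeft_apply_eq_or_forall_ne hconn.preconnected φ with
    hside | hswap
  · obtain ⟨ψ, hψ⟩ := subdivisionGraph.exists_iso_eq_sumMap_of_isLeft_apply_eq φ hside
    have hψ_id : ∀ v, ψ v = v := hc ψ
      ⟨fun v => by simpa [hψ] using hφ (.inl v), fun e => by simpa [hψ] using hφ (.inr e)⟩
    obtain rfl : ψ = (Iso.refl : G ≃g G) := RelIso.ext hψ_id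
    intro x
    rw [hψ]
    cases x <;> simp [Hom.mapEdgeSet]
  · obtain ⟨n, ⟨f⟩⟩ := hconn.exists_nonempty_iso_cycleGraph
      (subdivisionGraph.ncard_neighborSet_eq_two_of_isLeft_apply_ne φ hswap)
    exact (hcyc n).elim f.symm

/-- For a finite simple connected graph `G` of order `≥ 3` that is not
isomorphic to any cycle, `D(S(G)) ≤ D''(G)`. -/
theorem distinguishingNumber_subdivision_le_totalDistinguishingNumber
    {V : Type*} [Fintype V] (G : SimpleGraph V)
    (hconn : G.Connected) (hcard : 3 ≤ Fintype.card V)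
    (hcyc : ∀ m : ℕ, IsEmpty (G ≃g cycleGraph m)) :
    distinguishingNumber (subdivisionGraph G) ≤ totalDistinguishingNumber G :=
  distinguishingNumber_subdivision_le_totalDistinguishingNumber_general G hconn hcyc
end

section
/- For every natural number m ≥ 2, the distinguishing number of the subdivision graph of the star K_{1,m} equals ⌈√m⌉, i.e., D(S(K_{1,m})) = ⌈√m⌉. In particular, the bound D(S(G)) ≤ ⌈√(Δ(G))⌉ for connected graphs G of order at least 3 is sharp. -/
open SimpleGraph

namespace StarSub

variable {m : ℕ}

/-- The star `K_{1,m}`. -/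
abbrev B (m : ℕ) : SimpleGraph (Fin 1 ⊕ Fin m) := completeBipartiteGraph (Fin 1) (Fin m)

/-- The vertex type of the subdivision graph of the star. -/
abbrev Vx (m : ℕ) := (Fin 1 ⊕ Fin m) ⊕ (B m).edgeSet

/-- The subdivision graph of the star. -/
abbrev S (m : ℕ) : SimpleGraph (Vx m) := subdivisionGraph (B m)

/-- The `j`-th edge of the star. -/
def ed [NeZero m] (j : Fin m) : (B m).edgeSet :=
  ⟨s(Sum.inl 0, Sum.inr j), by simp⟩

/-- Extract the index of an edge. -/
def idx [NeZero m] (e : (B m).edgeSet) : Fin m :=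
  Sym2.lift ⟨fun x y => max (Sum.elim (fun _ => (0 : Fin m)) id x)
      (Sum.elim (fun _ => (0 : Fin m)) id y), fun x y => max_comm _ _⟩ e.val

@[simp] lemma idx_ed [NeZero m] (j : Fin m) : idx (ed j) = j := by
  simp [idx, ed]

@[simp] lemma mem_ed [NeZero m] (j : Fin m) (x : Fin 1 ⊕ Fin m) :
    x ∈ ((ed j : (B m).edgeSet) : Sym2 (Fin 1 ⊕ Fin m)) ↔
      x = Sum.inl 0 ∨ x = Sum.inr j := by
  simp [ed, Sym2.mem_iff]

lemma exists_rep [NeZero m] (e : (B m).edgeSet) : ∃ j : Fin m, e = ed j := by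
  obtain ⟨E, hE⟩ := e
  induction E using Sym2.ind with
  | _ x y =>
    rw [SimpleGraph.mem_edgeSet] at hE
    rcases x with a | j <;> rcases y with b | k
    · simp at hE
    · obtain rfl : a = 0 := Subsingleton.elim a 0
      exact ⟨k, rfl⟩
    · obtain rfl : b = 0 := Subsingleton.elim b 0
      exact ⟨j, Subtype.ext (Sym2.eq_swap)⟩
    · simp at hE

@[simp] lemma ed_idx [NeZero m] (e : (B m).edgeSet) : ed (idx e) = e := by
  obtain ⟨j, rfl⟩ := exists_rep e
  rw [idx_ed]

lemma ed_inj [NeZero m] {j k : Fin m} (h : ed (m := m) j = ed k) : j = k := by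
  have := congrArg (idx) h
  simpa using this

/-- The central vertex. -/
def C (m : ℕ) : Vx m := Sum.inl (Sum.inl 0)
/-- The leaf vertices. -/
def Lf (j : Fin m) : Vx m := Sum.inl (Sum.inr j)
/-- The subdivision (edge) vertices. -/
def Ev [NeZero m] (j : Fin m) : Vx m := Sum.inr (ed j)

lemma Ev_inj [NeZero m] {j k : Fin m} (h : Ev (m := m) j = Ev k) : j = k :=
  ed_inj (Sum.inr.inj h)

lemma Lf_inj {j k : Fin m} (h : Lf (m := m) j = Lf k) : j = k := by
  simpa [Lf] using h

lemma C_ne_Lf (j : Fin m) : C m ≠ Lf j := by simp [C, Lf]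

@[simp] lemma adj_inl_inl (v w : Fin 1 ⊕ Fin m) :
    ¬ (S m).Adj (Sum.inl v) (Sum.inl w) := by
  simp [subdivisionGraph, SimpleGraph.fromRel_adj]

@[simp] lemma adj_inr_inr (e f : (B m).edgeSet) :
    ¬ (S m).Adj (Sum.inr e) (Sum.inr f) := by
  simp [subdivisionGraph, SimpleGraph.fromRel_adj]

@[simp] lemma adj_inl_inr (v : Fin 1 ⊕ Fin m) (e : (B m).edgeSet) :
    (S m).Adj (Sum.inl v) (Sum.inr e) ↔ v ∈ (e : Sym2 (Fin 1 ⊕ Fin m)) := by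
  simp [subdivisionGraph, SimpleGraph.fromRel_adj]

@[simp] lemma adj_inr_inl (v : Fin 1 ⊕ Fin m) (e : (B m).edgeSet) :
    (S m).Adj (Sum.inr e) (Sum.inl v) ↔ v ∈ (e : Sym2 (Fin 1 ⊕ Fin m)) := by
  rw [SimpleGraph.adj_comm]; exact adj_inl_inr v e

lemma vx_cases [NeZero m] (x : Vx m) :
    x = C m ∨ (∃ j, x = Lf j) ∨ (∃ j, x = Ev j) := by
  rcases x with (a | j) | e
  · obtain rfl : a = 0 := Subsingleton.elim a 0
    exact Or.inl rfl
  · exact Or.inr (Or.inl ⟨j, rfl⟩)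
  · obtain ⟨j, rfl⟩ := exists_rep e
    exact Or.inr (Or.inr ⟨j, rfl⟩)

lemma adj_C_iff [NeZero m] (x : Vx m) :
    (S m).Adj (C m) x ↔ ∃ j, x = Ev j := by
  rcases x with (a | j) | e
  · simp [C, Ev]
  · simp only [C, adj_inl_inl, false_iff]
    rintro ⟨j', h⟩; exact absurd h (by simp [Lf, Ev])
  · obtain ⟨j, rfl⟩ := exists_rep e
    simp only [C, adj_inl_inr, Ev]
    constructor
    · intro _; exact ⟨j, rfl⟩
    · intro _; simp [ed]

lemma adj_Lf_iff [NeZero m] (j : Fin m) (x : Vx m) :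
    (S m).Adj (Lf j) x ↔ x = Ev j := by
  rcases x with (a | k) | e
  · simp [Lf, Ev, ed]
  · simp [Lf, Ev, ed]
  · obtain ⟨k, rfl⟩ := exists_rep e
    simp only [Lf, adj_inl_inr, Ev]
    constructor
    · intro h
      simp only [ed, Sym2.mem_iff] at h
      rcases h with h | h
      · exact absurd h (by simp)
      · obtain rfl : j = k := by simpa using h
        rfl
    · rintro h
      obtain rfl : k = j := ed_inj (Sum.inr.inj h.symm) ▸ rfl
      simp [ed]

lemma adj_Ev_iff [NeZero m] (j : Fin m) (x : Vx m) :
    (S m).Adj (Ev j) x ↔ x = C m ∨ x = Lf j := by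
  rcases x with (a | k) | e
  · obtain rfl : a = 0 := Subsingleton.elim a 0
    simp [Ev, C, Lf, ed]
  · simp only [Ev, adj_inr_inl, ed, Sym2.mem_iff, C, Lf]
    constructor
    · rintro (h | h)
      · exact absurd h (by simp)
      · simp only [Sum.inr.injEq] at h
        exact Or.inr (by rw [h])
    · rintro (h | h)
      · exact absurd h (by simp)
      · simp only [Sum.inl.injEq, Sum.inr.injEq] at h
        exact Or.inr (by rw [h])
  · simp only [Ev, adj_inr_inr, C, Lf, false_iff]
    rintro (h | h) <;> simp at h

section Structure

variable [NeZero m]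

lemma phi_C (hm : 2 ≤ m) (φ : S m ≃g S m) : φ (C m) = C m := by
  have h0 : (0 : Fin m) ≠ ⟨1, by omega⟩ := by
    intro h; exact absurd (congrArg Fin.val h) (by simp)
  have hadj : ∀ i : Fin m, (S m).Adj (φ (C m)) (φ (Ev i)) := by
    intro i
    exact φ.map_rel_iff.mpr ((adj_C_iff (Ev i)).mpr ⟨i, rfl⟩)
  have hne : φ (Ev (0 : Fin m)) ≠ φ (Ev ⟨1, by omega⟩) := by
    intro h; exact h0 (Ev_inj (φ.injective h))
  rcases vx_cases (φ (C m)) with h | ⟨j, h⟩ | ⟨j, h⟩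
  · exact h
  · exfalso
    have h1 := (adj_Lf_iff j _).mp (h ▸ hadj 0)
    have h2 := (adj_Lf_iff j _).mp (h ▸ hadj ⟨1, by omega⟩)
    exact hne (h1.trans h2.symm)
  · exfalso
    have h1 := (adj_Ev_iff j _).mp (h ▸ hadj 0)
    have h2 := (adj_Ev_iff j _).mp (h ▸ hadj ⟨1, by omega⟩)
    -- one of φ (Ev 0), φ (Ev 1) equals Lf j
    have key : ∃ a : Fin m, φ (Ev a) = Lf j := by
      rcases h1 with h1 | h1
      · rcases h2 with h2 | h2
        · exact absurd (h1.trans h2.symm) hne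
        · exact ⟨_, h2⟩
      · exact ⟨_, h1⟩
    obtain ⟨a, ha⟩ := key
    -- Ev a is adjacent to Lf a, so φ (Lf a) is adjacent to Lf j, hence = Ev j
    have hadj2 : (S m).Adj (φ (Ev a)) (φ (Lf a)) :=
      φ.map_rel_iff.mpr ((adj_Ev_iff a (Lf a)).mpr (Or.inr rfl))
    rw [ha] at hadj2
    have h3 : φ (Lf a) = Ev j := (adj_Lf_iff j _).mp hadj2
    have h4 : φ (Lf a) = φ (C m) := by rw [h3, h]
    exact C_ne_Lf a (φ.injective h4).symm

lemma phi_Ev (hm : 2 ≤ m) (φ : S m ≃g S m) (j : Fin m) :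
    ∃ k, φ (Ev j) = Ev k := by
  have : (S m).Adj (φ (C m)) (φ (Ev j)) :=
    φ.map_rel_iff.mpr ((adj_C_iff (Ev j)).mpr ⟨j, rfl⟩)
  rw [phi_C hm φ] at this
  exact (adj_C_iff _).mp this

lemma phi_Lf (hm : 2 ≤ m) (φ : S m ≃g S m) {j k : Fin m}
    (h : φ (Ev j) = Ev k) : φ (Lf j) = Lf k := by
  have hadj : (S m).Adj (φ (Ev j)) (φ (Lf j)) :=
    φ.map_rel_iff.mpr ((adj_Ev_iff j (Lf j)).mpr (Or.inr rfl))
  rw [h] at hadj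
  rcases (adj_Ev_iff k _).mp hadj with h' | h'
  · exfalso
    have : φ (Lf j) = φ (C m) := by rw [h', phi_C hm φ]
    exact C_ne_Lf j (φ.injective this).symm
  · exact h'

end Structure

section IsoOfPerm

variable [NeZero m]

/-- The vertex map of the automorphism induced by a permutation of the legs. -/
def vmap (σ : Equiv.Perm (Fin m)) : Vx m → Vx m := fun x =>
  match x with
  | Sum.inl (Sum.inl a) => Sum.inl (Sum.inl a)
  | Sum.inl (Sum.inr j) => Sum.inl (Sum.inr (σ j))
  | Sum.inr e => Sum.inr (ed (σ (idx e)))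

lemma vmap_vmap (σ τ : Equiv.Perm (Fin m)) (x : Vx m) :
    vmap σ (vmap τ x) = vmap (σ * τ) x := by
  rcases x with (a | j) | e <;> simp [vmap]

lemma vmap_one (x : Vx m) : vmap (1 : Equiv.Perm (Fin m)) x = x := by
  rcases x with (a | j) | e <;> simp [vmap]

/-- The automorphism of the subdivision graph induced by a permutation of the legs. -/
def isoOfPerm (σ : Equiv.Perm (Fin m)) : S m ≃g S m where
  toFun := vmap σ
  invFun := vmap σ⁻¹
  left_inv := fun x => by rw [vmap_vmap]; simp [vmap_one]
  right_inv := fun x => by rw [vmap_vmap]; simp [vmap_one]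
  map_rel_iff' := by
    intro x y
    rcases x with (a | j) | e <;> rcases y with (b | k) | f
    · simp [vmap]
    · simp [vmap]
    · obtain rfl : a = 0 := Subsingleton.elim a 0
      obtain ⟨k, rfl⟩ := exists_rep f
      simp [vmap]
    · simp [vmap]
    · simp [vmap]
    · obtain ⟨k, rfl⟩ := exists_rep f
      simp [vmap]
    · obtain rfl : b = 0 := Subsingleton.elim b 0
      obtain ⟨j, rfl⟩ := exists_rep e
      simp [vmap]
    · obtain ⟨j, rfl⟩ := exists_rep e
      simp [vmap]
    · simp [vmap]

@[simp] lemma isoOfPerm_C (σ : Equiv.Perm (Fin m)) : isoOfPerm σ (C m) = C m := rfl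

@[simp] lemma isoOfPerm_Lf (σ : Equiv.Perm (Fin m)) (j : Fin m) :
    isoOfPerm σ (Lf j) = Lf (σ j) := rfl

@[simp] lemma isoOfPerm_Ev (σ : Equiv.Perm (Fin m)) (j : Fin m) :
    isoOfPerm σ (Ev j) = Ev (σ j) := by
  show Sum.inr (ed (σ (idx (ed j)))) = Sum.inr (ed (σ j))
  rw [idx_ed]

end IsoOfPerm

section Bounds

variable [NeZero m]

lemma exists_coloring (hm : 2 ≤ m) {r : ℕ} (hr : m ≤ r * r) (hr1 : 0 < r) :
    ∃ c : Vx m → Fin r, IsDistinguishingVertexColoring (S m) c := by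
  have hcard : Fintype.card (Fin m) ≤ Fintype.card (Fin r × Fin r) := by
    simpa using hr
  obtain ⟨p⟩ := Function.Embedding.nonempty_of_card_le hcard
  refine ⟨fun x => match x with
    | Sum.inl (Sum.inl _) => ⟨0, hr1⟩
    | Sum.inl (Sum.inr j) => (p j).2
    | Sum.inr e => (p (idx e)).1, ?_⟩
  intro φ hφ v
  have hC : φ (C m) = C m := phi_C hm φ
  have hEv : ∀ j, φ (Ev j) = Ev j := by
    intro j
    obtain ⟨k, hk⟩ := phi_Ev hm φ j
    have hLf := phi_Lf hm φ hk
    have h1 := hφ (Ev j)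
    have h2 := hφ (Lf j)
    rw [hk] at h1
    rw [hLf] at h2
    simp only [Ev, Lf, idx_ed] at h1 h2
    have hp : p k = p j := Prod.ext h1 h2
    rw [hk, p.injective hp]
  rcases vx_cases v with rfl | ⟨j, rfl⟩ | ⟨j, rfl⟩
  · exact hC
  · exact phi_Lf hm φ (hEv j)
  · exact hEv j

lemma card_lower (hm : 2 ≤ m) {r : ℕ} (c : Vx m → Fin r)
    (hc : IsDistinguishingVertexColoring (S m) c) : m ≤ r * r := by
  by_contra h
  push_neg at h
  have hcard : Fintype.card (Fin r × Fin r) < Fintype.card (Fin m) := by simpa using h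
  obtain ⟨j, k, hjk, heq⟩ := Fintype.exists_ne_map_eq_of_card_lt
    (fun j : Fin m => (c (Ev j), c (Lf j))) hcard
  set σ := Equiv.swap j k with hσ
  have hpres : ∀ v, c (isoOfPerm σ v) = c v := by
    intro v
    rcases vx_cases v with rfl | ⟨i, rfl⟩ | ⟨i, rfl⟩
    · rw [isoOfPerm_C]
    · rw [isoOfPerm_Lf]
      rcases eq_or_ne i j with rfl | hij
      · rw [hσ, Equiv.swap_apply_left]
        exact (congrArg Prod.snd heq).symm
      rcases eq_or_ne i k with rfl | hik
      · rw [hσ, Equiv.swap_apply_right]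
        exact congrArg Prod.snd heq
      · rw [hσ, Equiv.swap_apply_of_ne_of_ne hij hik]
    · rw [isoOfPerm_Ev]
      rcases eq_or_ne i j with rfl | hij
      · rw [hσ, Equiv.swap_apply_left]
        exact (congrArg Prod.fst heq).symm
      rcases eq_or_ne i k with rfl | hik
      · rw [hσ, Equiv.swap_apply_right]
        exact congrArg Prod.fst heq
      · rw [hσ, Equiv.swap_apply_of_ne_of_ne hij hik]
  have hfix := hc (isoOfPerm σ) hpres (Lf j)
  rw [isoOfPerm_Lf, hσ, Equiv.swap_apply_left] at hfix
  exact hjk (Lf_inj hfix).symm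

end Bounds

end StarSub

/-- For every `m ≥ 2`, `D(S(K_{1,m})) = ⌈√m⌉`; in particular the bound
`D(S(G)) ≤ ⌈√(Δ(G))⌉` is sharp. -/
theorem distinguishingNumber_subdivision_star_eq_ceil_sqrt (m : ℕ) (hm : 2 ≤ m) :
    distinguishingNumber (subdivisionGraph (completeBipartiteGraph (Fin 1) (Fin m)))
      = ⌈Real.sqrt (m : ℝ)⌉₊ := by
  haveI : NeZero m := ⟨by omega⟩
  set r0 := ⌈Real.sqrt (m : ℝ)⌉₊ with hr0def
  have hsq : m ≤ r0 * r0 := by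
    have h1 : Real.sqrt m ≤ (r0 : ℝ) := Nat.le_ceil _
    have h2 : (m : ℝ) ≤ (r0 : ℝ) * r0 := by
      nlinarith [Real.sq_sqrt (show (0:ℝ) ≤ (m:ℝ) by positivity), Real.sqrt_nonneg (m:ℝ)]
    exact_mod_cast h2
  have hr1 : 0 < r0 := by
    rcases Nat.eq_zero_or_pos r0 with h | h
    · rw [h] at hsq; omega
    · exact h
  have hmem : r0 ∈ {r | ∃ c : ((Fin 1 ⊕ Fin m) ⊕
      (completeBipartiteGraph (Fin 1) (Fin m)).edgeSet) → Fin r,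
      IsDistinguishingVertexColoring (subdivisionGraph (completeBipartiteGraph (Fin 1) (Fin m))) c} :=
    StarSub.exists_coloring hm hsq hr1
  apply le_antisymm
  · exact Nat.sInf_le hmem
  · apply le_csInf ⟨r0, hmem⟩
    rintro r ⟨c, hc⟩
    have hle : m ≤ r * r := StarSub.card_lower hm c hc
    rw [hr0def, Nat.ceil_le]
    have hs : Real.sqrt m ≤ Real.sqrt ((r : ℝ) * r) :=
      Real.sqrt_le_sqrt (by exact_mod_cast hle)
    rwa [Real.sqrt_mul_self (by positivity : (0:ℝ) ≤ (r:ℝ))] at hs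
end

section
/- Let G be a finite simple connected graph such that D(G) ≠ 1 and χ_D(G) = 2, where D(G) is the distinguishing number and χ_D(G) is the distinguishing chromatic number of G. Then the automorphism group of G has exactly 2 elements. -/
open SimpleGraph

/-- If `G` is a finite simple connected graph with `D(G) ≠ 1` and
`χ_D(G) = 2`, then `|Aut(G)| = 2`. -/
theorem card_aut_eq_two_of_chromaticDistinguishing_eq_two
    {V : Type*} [Fintype V] (G : SimpleGraph V) (hconn : G.Connected)
    (hD : distinguishingNumber G ≠ 1)
    (hchiD : distinguishingChromaticNumber G = 2) :
    Nat.card (G ≃g G) = 2 := by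
  classical
  -- V is nonempty
  have hne : Nonempty V := by
    by_contra h
    have h0 : (0:ℕ) ∈ {r | ∃ c : V → Fin r,
        IsProperVertexColoring G c ∧ IsDistinguishingVertexColoring G c} := by
      refine ⟨fun v => absurd ⟨v⟩ h, fun u v _ => absurd ⟨u⟩ h,
        fun φ _ v => absurd ⟨v⟩ h⟩
    have : distinguishingChromaticNumber G = 0 :=
      Nat.eq_zero_of_le_zero (Nat.sInf_le h0)
    omega
  -- obtain a proper distinguishing 2-coloring
  have hsne : {r | ∃ c : V → Fin r,
      IsProperVertexColoring G c ∧ IsDistinguishingVertexColoring G c}.Nonempty := by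
    by_contra h
    rw [Set.not_nonempty_iff_eq_empty] at h
    rw [distinguishingChromaticNumber, h, Nat.sInf_empty] at hchiD
    omega
  have hmem := Nat.sInf_mem hsne
  rw [show sInf {r | ∃ c : V → Fin r,
      IsProperVertexColoring G c ∧ IsDistinguishingVertexColoring G c}
      = distinguishingChromaticNumber G from rfl, hchiD] at hmem
  obtain ⟨c, hprop, hdist⟩ := hmem
  -- there is a nontrivial automorphism
  have hnontriv : ∃ φ : G ≃g G, ∃ v, φ v ≠ v := by
    by_contra h
    push_neg at h
    have h1 : (1:ℕ) ∈ {r | ∃ c : V → Fin r, IsDistinguishingVertexColoring G c} :=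
      ⟨fun _ => 0, fun φ _ v => h φ v⟩
    have hle : distinguishingNumber G ≤ 1 := Nat.sInf_le h1
    have hz : distinguishingNumber G ≠ 0 := by
      intro hz
      have := Nat.sInf_mem ⟨1, h1⟩
      rw [show sInf {r | ∃ c : V → Fin r, IsDistinguishingVertexColoring G c}
          = distinguishingNumber G from rfl, hz] at this
      obtain ⟨c0, -⟩ := this
      exact (c0 hne.some).elim0
    omega
  obtain ⟨φ₀, v₀, hv₀⟩ := hnontriv
  -- any nontrivial automorphism swaps colors everywhere
  have key : ∀ φ : G ≃g G, (∃ v, φ v ≠ v) → ∀ u, c (φ u) ≠ c u := by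
    intro φ hφ u
    have hw : ∃ w, c (φ w) ≠ c w := by
      by_contra h
      push_neg at h
      obtain ⟨v, hv⟩ := hφ
      exact hv (hdist φ h v)
    obtain ⟨w, hw⟩ := hw
    have step : ∀ {x y : V}, G.Walk x y → c (φ x) ≠ c x → c (φ y) ≠ c y := by
      intro x y p
      induction p with
      | nil => exact fun h => h
      | cons hadj p ih =>
        intro hx
        apply ih
        have h1 : c _ ≠ c _ := hprop _ _ hadj
        have h2 : c (φ _) ≠ c (φ _) := hprop _ _ (φ.map_adj_iff.2 hadj)
        revert hx h1 h2
        generalize c (φ _) = a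
        generalize c (φ _) = b
        generalize c _ = x'
        generalize c _ = y'
        revert a b x' y'
        decide
    exact step (hconn.preconnected w u).some hw
  -- any two nontrivial automorphisms are equal
  have uniq : ∀ φ ψ : G ≃g G, (∃ v, φ v ≠ v) → (∃ v, ψ v ≠ v) → φ = ψ := by
    intro φ ψ hφ hψ
    have hpres : ∀ v, c ((ψ.symm.trans φ) v) = c v := by
      intro v
      have h1 : c (φ (ψ.symm v)) ≠ c (ψ.symm v) := key φ hφ _
      have h2 : c (ψ (ψ.symm v)) ≠ c (ψ.symm v) := key ψ hψ _
      have h3 : ψ (ψ.symm v) = v := ψ.apply_symm_apply v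
      rw [h3] at h2
      show c (φ (ψ.symm v)) = c v
      revert h1 h2
      generalize c (φ (ψ.symm v)) = a
      generalize c (ψ.symm v) = b
      generalize c v = d
      revert a b d
      decide
    have := hdist _ hpres
    apply RelIso.ext
    intro v
    have h4 := this (ψ v)
    simpa using h4
  -- conclude
  rw [Nat.card_eq_two_iff]
  refine ⟨RelIso.refl _, φ₀, ?_, ?_⟩
  · intro h
    apply hv₀
    rw [← h]
    rfl
  · apply Set.eq_univ_of_forall
    intro ψ
    by_cases hψ : ∃ v, ψ v ≠ v
    · right
      exact (uniq ψ φ₀ hψ ⟨v₀, hv₀⟩)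
    · left
      push_neg at hψ
      exact RelIso.ext hψ
end

section
/- Let G be a finite simple connected graph of order n ≥ 3 that is not isomorphic to a cycle Cₙ for any n, and suppose the distinguishing number of G satisfies D(G) = 2. Then the distinguishing chromatic number of the subdivision graph of G satisfies χ_D(S(G)) = 3. -/
open SimpleGraph

section Aux

open Sum

variable {V : Type*} {G : SimpleGraph V}

lemma sub_adj_lr (v : V) (e : G.edgeSet) :
    (subdivisionGraph G).Adj (inl v) (inr e) ↔ v ∈ (e : Sym2 V) := by
  simp [subdivisionGraph, SimpleGraph.fromRel_adj]

lemma sub_adj_ll (u v : V) : ¬ (subdivisionGraph G).Adj (inl u) (inl v) := by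
  simp [subdivisionGraph, SimpleGraph.fromRel_adj]

lemma sub_adj_rr (e f : G.edgeSet) : ¬ (subdivisionGraph G).Adj (inr e) (inr f) := by
  simp [subdivisionGraph, SimpleGraph.fromRel_adj]

lemma sub_adj_rl (v : V) (e : G.edgeSet) :
    (subdivisionGraph G).Adj (inr e) (inl v) ↔ v ∈ (e : Sym2 V) := by
  rw [SimpleGraph.adj_comm]; exact sub_adj_lr v e

lemma mem_map_iso (ψ : G ≃g G) (v : V) (z : Sym2 V) :
    ψ v ∈ Sym2.map ψ z ↔ v ∈ z := by
  rw [Sym2.mem_map]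
  constructor
  · rintro ⟨a, ha, h⟩
    rwa [← ψ.toEquiv.injective h]
  · exact fun h => ⟨v, h, rfl⟩

/-- The automorphism of `S(G)` induced by an automorphism of `G`. -/
def liftIso (ψ : G ≃g G) : subdivisionGraph G ≃g subdivisionGraph G where
  toEquiv := Equiv.sumCongr ψ.toEquiv ψ.mapEdgeSet
  map_rel_iff' := by
    rintro (v | e) (w | f)
    · simp [sub_adj_ll]
    · simp only [Equiv.sumCongr_apply, Sum.map_inl, Sum.map_inr, sub_adj_lr]
      show ψ v ∈ (ψ.mapEdgeSet f : Sym2 V) ↔ v ∈ (f : Sym2 V)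
      simp only [SimpleGraph.Iso.mapEdgeSet, SimpleGraph.Hom.mapEdgeSet,
        RelEmbedding.coe_toRelHom, Equiv.coe_fn_mk]
      exact mem_map_iso ψ v f
    · simp only [Equiv.sumCongr_apply, Sum.map_inl, Sum.map_inr, sub_adj_rl]
      show ψ w ∈ (ψ.mapEdgeSet e : Sym2 V) ↔ w ∈ (e : Sym2 V)
      simp only [SimpleGraph.Iso.mapEdgeSet, SimpleGraph.Hom.mapEdgeSet,
        RelEmbedding.coe_toRelHom, Equiv.coe_fn_mk]
      exact mem_map_iso ψ w e
    · simp [sub_adj_rr]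

lemma liftIso_spec (ψ : G ≃g G) :
    (liftIso ψ : V ⊕ G.edgeSet → V ⊕ G.edgeSet) = Sum.map ψ ψ.mapEdgeSet := rfl

lemma adj_of_lift (φ : subdivisionGraph G ≃g subdivisionGraph G) (ψ : V → V)
    (h : ∀ v, φ (inl v) = inl (ψ v)) (hE : ∀ e, ∃ f, φ (inr e) = inr f)
    {u v : V} (huv : G.Adj u v) : G.Adj (ψ u) (ψ v) := by
  set e : G.edgeSet := ⟨s(u, v), huv⟩ with he
  obtain ⟨f, hf⟩ := hE e
  have hu : (subdivisionGraph G).Adj (inl u) (inr e) :=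
    (sub_adj_lr u e).2 (by simp [he])
  have hv : (subdivisionGraph G).Adj (inl v) (inr e) :=
    (sub_adj_lr v e).2 (by simp [he])
  have hu' := φ.map_rel_iff.2 hu
  have hv' := φ.map_rel_iff.2 hv
  rw [h, hf, sub_adj_lr] at hu' hv'
  have hne : ψ u ≠ ψ v := by
    intro hww
    have : φ (inl u) = φ (inl v) := by rw [h, h, hww]
    exact huv.ne (Sum.inl.inj (φ.toEquiv.injective this))
  have hfe : (f : Sym2 V) = s(ψ u, ψ v) := (Sym2.mem_and_mem_iff hne).1 ⟨hu', hv'⟩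
  have := f.2
  rwa [hfe, SimpleGraph.mem_edgeSet] at this

lemma exists_adj_of_connected [Fintype V] (hconn : G.Connected)
    (h2 : 2 ≤ Fintype.card V) : ∃ u v, G.Adj u v := by
  obtain ⟨u, v, huv⟩ := Fintype.exists_pair_of_one_lt_card h2
  obtain ⟨p⟩ := hconn.preconnected u v
  cases p with
  | nil => exact absurd rfl huv
  | cons h _ => exact ⟨_, _, h⟩

lemma exists_nontrivial_aut (hD : distinguishingNumber G = 2) :
    ∃ ψ : G ≃g G, ∃ v, ψ v ≠ v := by
  have h1 : (1 : ℕ) ∉ {r | ∃ c : V → Fin r, IsDistinguishingVertexColoring G c} := by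
    apply Nat.notMem_of_lt_sInf
    rw [show sInf {r | ∃ c : V → Fin r, IsDistinguishingVertexColoring G c}
        = distinguishingNumber G from rfl, hD]
    norm_num
  rw [Set.mem_setOf_eq] at h1
  push_neg at h1
  have := h1 (fun _ => 0)
  unfold IsDistinguishingVertexColoring at this
  push_neg at this
  obtain ⟨ψ, _, v, hv⟩ := this
  exact ⟨ψ, v, hv⟩

lemma exists_dist_two (hD : distinguishingNumber G = 2) :
    ∃ c : V → Fin 2, IsDistinguishingVertexColoring G c := by
  have hne : {r | ∃ c : V → Fin r, IsDistinguishingVertexColoring G c}.Nonempty := by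
    by_contra h
    rw [Set.not_nonempty_iff_eq_empty] at h
    rw [distinguishingNumber, h, Nat.sInf_empty] at hD
    exact absurd hD (by norm_num)
  have := Nat.sInf_mem hne
  rw [show sInf {r | ∃ c : V → Fin r, IsDistinguishingVertexColoring G c}
      = distinguishingNumber G from rfl, hD] at this
  exact this

/-- A distinguishing 2-coloring of `G` extends to a proper distinguishing
3-coloring of `S(G)`. -/
lemma three_mem (c₂ : V → Fin 2) (hdist : IsDistinguishingVertexColoring G c₂) :
    ∃ c : (V ⊕ G.edgeSet) → Fin 3,
      IsProperVertexColoring (subdivisionGraph G) c ∧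
      IsDistinguishingVertexColoring (subdivisionGraph G) c := by
  have hne2 : ∀ i : Fin 2, (Fin.castSucc i : Fin 3) ≠ 2 := by decide
  refine ⟨Sum.elim (fun v => (c₂ v).castSucc) (fun _ => (2 : Fin 3)), ?_, ?_⟩
  · rintro (u | e) (w | f) hadj
    · exact absurd hadj (sub_adj_ll u w)
    · exact hne2 (c₂ u)
    · exact fun h => hne2 (c₂ w) h.symm
    · exact absurd hadj (sub_adj_rr e f)
  · intro φ hc
    have hclr : ∀ v : V, ∃ w, φ (inl v) = inl w := by
      intro v
      cases hx : φ (inl v) with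
      | inl w => exact ⟨w, rfl⟩
      | inr f =>
        exfalso
        have := hc (inl v)
        rw [hx] at this
        exact hne2 (c₂ v) this.symm
    have hcrr : ∀ e : G.edgeSet, ∃ f, φ (inr e) = inr f := by
      intro e
      cases hx : φ (inr e) with
      | inl w =>
        exfalso
        have := hc (inr e)
        rw [hx] at this
        exact hne2 (c₂ w) this
      | inr f => exact ⟨f, rfl⟩
    have hc' : ∀ x, Sum.elim (fun v => (c₂ v).castSucc) (fun _ => (2 : Fin 3)) (φ.symm x)
        = Sum.elim (fun v => (c₂ v).castSucc) (fun _ => (2 : Fin 3)) x := by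
      intro x
      conv_rhs => rw [← φ.apply_symm_apply x]
      exact (hc (φ.symm x)).symm
    have hclr' : ∀ v : V, ∃ w, φ.symm (inl v) = inl w := by
      intro v
      cases hx : φ.symm (inl v) with
      | inl w => exact ⟨w, rfl⟩
      | inr f =>
        exfalso
        have := hc' (inl v)
        rw [hx] at this
        exact hne2 (c₂ v) this.symm
    have hcrr' : ∀ e : G.edgeSet, ∃ f, φ.symm (inr e) = inr f := by
      intro e
      cases hx : φ.symm (inr e) with
      | inl w =>
        exfalso
        have := hc' (inr e)
        rw [hx] at this
        exact hne2 (c₂ w) this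
      | inr f => exact ⟨f, rfl⟩
    choose ψ hψ using hclr
    choose ψ' hψ' using hclr'
    have hlinv : ∀ v, ψ' (ψ v) = v := by
      intro v
      have := φ.symm_apply_apply (inl v)
      rw [hψ v, hψ' (ψ v)] at this
      exact Sum.inl.inj this
    have hrinv : ∀ v, ψ (ψ' v) = v := by
      intro v
      have := φ.apply_symm_apply (inl v)
      rw [hψ' v, hψ (ψ' v)] at this
      exact Sum.inl.inj this
    let Ψ : G ≃g G :=
      { toFun := ψ
        invFun := ψ'
        left_inv := hlinv
        right_inv := hrinv
        map_rel_iff' := by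
          intro a b
          simp only [Equiv.coe_fn_mk]
          constructor
          · intro h
            have := adj_of_lift φ.symm ψ' hψ' hcrr' h
            rwa [hlinv, hlinv] at this
          · exact fun h => adj_of_lift φ ψ hψ hcrr h }
    have hcol : ∀ v, c₂ (Ψ v) = c₂ v := by
      intro v
      have := hc (inl v)
      rw [hψ v] at this
      exact Fin.castSucc_injective 2 this
    have hid : ∀ v, ψ v = v := hdist Ψ hcol
    rintro (v | e)
    · rw [hψ v, hid v]
    · obtain ⟨f, hf⟩ := hcrr e
      rw [hf]
      congr 1
      obtain ⟨z, hz⟩ := e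
      induction z using Sym2.ind with
      | _ u w =>
        have hadj : G.Adj u w := hz
        have h1 : (subdivisionGraph G).Adj (inl u) (inr ⟨s(u, w), hz⟩) :=
          (sub_adj_lr _ _).2 (by simp)
        have h2 : (subdivisionGraph G).Adj (inl w) (inr ⟨s(u, w), hz⟩) :=
          (sub_adj_lr _ _).2 (by simp)
        have h1' := φ.map_rel_iff.2 h1
        have h2' := φ.map_rel_iff.2 h2
        rw [hψ, hid, hf, sub_adj_lr] at h1' h2'
        have : (f : Sym2 V) = s(u, w) := (Sym2.mem_and_mem_iff hadj.ne).1 ⟨h1', h2'⟩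
        apply Subtype.ext
        exact this

/-- No proper distinguishing 2-coloring of `S(G)` exists if `G` is connected and has
a nontrivial automorphism. -/
lemma two_notMem (hconn : G.Connected) (ψ0 : G ≃g G) (v0 : V) (hv0 : ψ0 v0 ≠ v0)
    (c : (V ⊕ G.edgeSet) → Fin 2)
    (hp : IsProperVertexColoring (subdivisionGraph G) c)
    (hd : IsDistinguishingVertexColoring (subdivisionGraph G) c) : False := by
  have two_ne : ∀ a b z : Fin 2, a ≠ z → b ≠ z → a = b := by decide
  have key : ∀ u v, G.Adj u v → c (inl u) = c (inl v) := by
    intro u v h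
    have h1 := hp (inl u) (inr ⟨s(u, v), h⟩) ((sub_adj_lr _ _).2 (by simp))
    have h2 := hp (inl v) (inr ⟨s(u, v), h⟩) ((sub_adj_lr _ _).2 (by simp))
    exact two_ne _ _ _ h1 h2
  have hconst : ∀ u v : V, c (inl u) = c (inl v) := by
    intro u v
    obtain ⟨p⟩ := hconn.preconnected u v
    induction p with
    | nil => rfl
    | cons h p ih => exact (key _ _ h).trans ih
  have hedge : ∀ e f : G.edgeSet, c (inr e) = c (inr f) := by
    have hpt : ∀ e : G.edgeSet, ∃ v, v ∈ (e : Sym2 V) := by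
      rintro ⟨z, hz⟩
      induction z using Sym2.ind with
      | _ u w => exact ⟨u, by simp⟩
    intro e f
    obtain ⟨u, hu⟩ := hpt e
    obtain ⟨v, hv⟩ := hpt f
    have h1 := hp (inl u) (inr e) ((sub_adj_lr _ _).2 hu)
    have h2 := hp (inl v) (inr f) ((sub_adj_lr _ _).2 hv)
    rw [hconst u v] at h1
    exact two_ne _ _ _ (fun h => h1 h.symm) (fun h => h2 h.symm)
  have hpres : ∀ x, c (liftIso ψ0 x) = c x := by
    rintro (v | e) <;> rw [show (liftIso ψ0 : V ⊕ G.edgeSet → V ⊕ G.edgeSet) _ = _ from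
      congrFun (liftIso_spec ψ0) _]
    · exact hconst _ _
    · exact hedge _ _
  have := hd (liftIso ψ0) hpres (inl v0)
  rw [show (liftIso ψ0 : V ⊕ G.edgeSet → V ⊕ G.edgeSet) _ = _ from
      congrFun (liftIso_spec ψ0) _] at this
  exact hv0 (Sum.inl.inj this)

end Aux

/-- If `G` is a finite simple connected graph of order `≥ 3`, not
isomorphic to any cycle, with `D(G) = 2`, then `χ_D(S(G)) = 3`. -/
theorem chromaticDistinguishing_subdivision_eq_three_of_distinguishing_eq_two
    {V : Type*} [Fintype V] (G : SimpleGraph V)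
    (hconn : G.Connected) (hcard : 3 ≤ Fintype.card V)
    (hcyc : ∀ m : ℕ, IsEmpty (G ≃g cycleGraph m))
    (hD : distinguishingNumber G = 2) :
    distinguishingChromaticNumber (subdivisionGraph G) = 3 := by
  classical
  obtain ⟨ψ0, v0, hv0⟩ := exists_nontrivial_aut hD
  obtain ⟨c₂, hc₂⟩ := exists_dist_two hD
  obtain ⟨c3, hp3, hd3⟩ := three_mem c₂ hc₂
  have h3 : (3 : ℕ) ∈ {r | ∃ c : (V ⊕ G.edgeSet) → Fin r,
      IsProperVertexColoring (subdivisionGraph G) c ∧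
      IsDistinguishingVertexColoring (subdivisionGraph G) c} := ⟨c3, hp3, hd3⟩
  rw [distinguishingChromaticNumber]
  refine le_antisymm (Nat.sInf_le h3) ?_
  have hmem := Nat.sInf_mem ⟨3, h3⟩
  by_contra hlt
  push_neg at hlt
  interval_cases h : sInf {r | ∃ c : (V ⊕ G.edgeSet) → Fin r,
      IsProperVertexColoring (subdivisionGraph G) c ∧
      IsDistinguishingVertexColoring (subdivisionGraph G) c}
  · obtain ⟨c, -, -⟩ := hmem
    have hV : Nonempty V := Fintype.card_pos_iff.mp (by omega)
    exact (c (Sum.inl hV.some)).elim0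
  · obtain ⟨c, hp, -⟩ := hmem
    obtain ⟨u, v, huv⟩ := exists_adj_of_connected hconn (by omega)
    exact hp (Sum.inl u) (Sum.inr ⟨s(u, v), huv⟩)
      ((sub_adj_lr _ _).2 (by simp)) (Subsingleton.elim _ _)
  · obtain ⟨c, hp, hd⟩ := hmem
    exact two_notMem hconn ψ0 v0 hv0 c hp hd
end

section
/- Let G be a finite simple connected graph of order n ≥ 3 with distinguishing number D(G) = 1 (i.e., G is asymmetric). Then the distinguishing chromatic number of the subdivision graph of G satisfies χ_D(S(G)) = 2. -/
open SimpleGraph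

lemma subdiv_adj_lr {V : Type*} (G : SimpleGraph V) (u : V) (e : G.edgeSet) :
    (subdivisionGraph G).Adj (Sum.inl u) (Sum.inr e) ↔ u ∈ (e : Sym2 V) := by
  simp [subdivisionGraph, SimpleGraph.fromRel_adj]

lemma subdiv_not_adj_ll {V : Type*} (G : SimpleGraph V) (u v : V) :
    ¬ (subdivisionGraph G).Adj (Sum.inl u) (Sum.inl v) := by
  simp [subdivisionGraph, SimpleGraph.fromRel_adj]

lemma subdiv_not_adj_rr {V : Type*} (G : SimpleGraph V) (e f : G.edgeSet) :
    ¬ (subdivisionGraph G).Adj (Sum.inr e) (Sum.inr f) := by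
  simp [subdivisionGraph, SimpleGraph.fromRel_adj]

/-- From an automorphism of `S(G)` mapping `inl`s to `inl`s and `inr`s to `inr`s,
extract the induced vertex map, which preserves adjacency. -/
lemma induced_map {V : Type*} (G : SimpleGraph V)
    (φ : subdivisionGraph G ≃g subdivisionGraph G)
    (hL : ∀ v : V, ∃ w, φ (Sum.inl v) = Sum.inl w)
    (hR : ∀ e : G.edgeSet, ∃ f, φ (Sum.inr e) = Sum.inr f) :
    ∃ σ : V → V, (∀ v, φ (Sum.inl v) = Sum.inl (σ v)) ∧
      ∀ u v, G.Adj u v → G.Adj (σ u) (σ v) := by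
  choose σ hσ using hL
  refine ⟨σ, hσ, fun u v huv => ?_⟩
  set e : G.edgeSet := ⟨s(u, v), huv⟩ with he
  obtain ⟨f, hf⟩ := hR e
  have hu : (subdivisionGraph G).Adj (Sum.inl u) (Sum.inr e) :=
    (subdiv_adj_lr G u e).mpr (by simp [he])
  have hv : (subdivisionGraph G).Adj (Sum.inl v) (Sum.inr e) :=
    (subdiv_adj_lr G v e).mpr (by simp [he])
  have hu' : σ u ∈ (f : Sym2 V) := by
    have := φ.map_adj_iff.mpr hu
    rw [hσ, hf, subdiv_adj_lr] at this
    exact this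
  have hv' : σ v ∈ (f : Sym2 V) := by
    have := φ.map_adj_iff.mpr hv
    rw [hσ, hf, subdiv_adj_lr] at this
    exact this
  have hne : σ u ≠ σ v := by
    intro h
    have : φ (Sum.inl u) = φ (Sum.inl v) := by rw [hσ, hσ, h]
    exact huv.ne (Sum.inl.inj (φ.toEquiv.injective this))
  have : (f : Sym2 V) = s(σ u, σ v) := (Sym2.mem_and_mem_iff hne).mp ⟨hu', hv'⟩
  have hmem : s(σ u, σ v) ∈ G.edgeSet := this ▸ f.2
  rwa [SimpleGraph.mem_edgeSet] at hmem

/-- If `G` is a finite simple connected graph of order `≥ 3` with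
`D(G) = 1`, then `χ_D(S(G)) = 2`. -/
theorem chromaticDistinguishing_subdivision_eq_two_of_asymmetric
    {V : Type*} [Fintype V] (G : SimpleGraph V)
    (hconn : G.Connected) (hcard : 3 ≤ Fintype.card V)
    (hD : distinguishingNumber G = 1) :
    distinguishingChromaticNumber (subdivisionGraph G) = 2 := by
  classical
  have hV : Nontrivial V := Fintype.one_lt_card_iff_nontrivial.mp (by omega)
  -- G has an edge
  obtain ⟨u₀, v₀, hne₀⟩ := hV
  obtain ⟨w⟩ := hconn u₀ v₀
  have hedge : ∃ a b : V, G.Adj a b := by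
    cases w with
    | nil => exact absurd rfl hne₀
    | cons h p => exact ⟨_, _, h⟩
  obtain ⟨a₀, b₀, hab₀⟩ := hedge
  -- every automorphism of G is trivial
  have hAut : ∀ ψ : G ≃g G, ∀ v, ψ v = v := by
    have hne : {r | ∃ c : V → Fin r, IsDistinguishingVertexColoring G c}.Nonempty := by
      refine ⟨Fintype.card V, Fintype.equivFin V, fun ψ h v => ?_⟩
      exact (Fintype.equivFin V).injective (h v)
    have h1 : 1 ∈ {r | ∃ c : V → Fin r, IsDistinguishingVertexColoring G c} := by
      rw [← hD]; exact Nat.sInf_mem hne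
    obtain ⟨c, hc⟩ := h1
    exact fun ψ => hc ψ (fun v => Subsingleton.elim _ _)
  -- the two-coloring
  set c : V ⊕ G.edgeSet → Fin 2 := Sum.elim (fun _ => 0) (fun _ => 1) with hc
  have h2 : 2 ∈ {r | ∃ c : (V ⊕ G.edgeSet) → Fin r,
      IsProperVertexColoring (subdivisionGraph G) c ∧
      IsDistinguishingVertexColoring (subdivisionGraph G) c} := by
    refine ⟨c, ?_, ?_⟩
    · rintro (x | x) (y | y) h
      · exact absurd h (subdiv_not_adj_ll G x y)
      · simp [hc]
      · simp [hc]
      · exact absurd h (subdiv_not_adj_rr G x y)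
    · intro φ hφ
      have hL : ∀ v : V, ∃ w, φ (Sum.inl v) = Sum.inl w := by
        intro v
        have := hφ (Sum.inl v)
        cases h : φ (Sum.inl v) with
        | inl w => exact ⟨w, rfl⟩
        | inr f => rw [h] at this; simp [hc] at this
      have hR : ∀ e : G.edgeSet, ∃ f, φ (Sum.inr e) = Sum.inr f := by
        intro e
        have := hφ (Sum.inr e)
        cases h : φ (Sum.inr e) with
        | inl w => rw [h] at this; simp [hc] at this
        | inr f => exact ⟨f, rfl⟩
      obtain ⟨σ, hσ, hσadj⟩ := induced_map G φ hL hR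
      -- same for the inverse
      have hL' : ∀ v : V, ∃ w, φ.symm (Sum.inl v) = Sum.inl w := by
        intro v
        cases h : φ.symm (Sum.inl v) with
        | inl w => exact ⟨w, rfl⟩
        | inr f =>
          have : φ (Sum.inr f) = Sum.inl v := by rw [← h]; exact φ.apply_symm_apply _
          obtain ⟨f', hf'⟩ := hR f
          rw [hf'] at this; exact absurd this (by simp)
      have hR' : ∀ e : G.edgeSet, ∃ f, φ.symm (Sum.inr e) = Sum.inr f := by
        intro e
        cases h : φ.symm (Sum.inr e) with
        | inl w =>
          have : φ (Sum.inl w) = Sum.inr e := by rw [← h]; exact φ.apply_symm_apply _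
          obtain ⟨w', hw'⟩ := hL w
          rw [hw'] at this; exact absurd this (by simp)
        | inr f => exact ⟨f, rfl⟩
      obtain ⟨τ, hτ, hτadj⟩ := induced_map G φ.symm hL' hR'
      have hτσ : ∀ v, τ (σ v) = v := by
        intro v
        have : φ.symm (Sum.inl (σ v)) = Sum.inl v := by
          rw [← hσ]; exact φ.symm_apply_apply _
        rw [hτ] at this
        exact Sum.inl.inj this
      have hστ : ∀ v, σ (τ v) = v := by
        intro v
        have : φ (Sum.inl (τ v)) = Sum.inl v := by
          rw [← hτ]; exact φ.apply_symm_apply _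
        rw [hσ] at this
        exact Sum.inl.inj this
      -- build the automorphism of G
      let ψ : G ≃g G :=
        { toFun := σ, invFun := τ, left_inv := hτσ, right_inv := hστ,
          map_rel_iff' := by
            intro u v
            show G.Adj (σ u) (σ v) ↔ G.Adj u v
            constructor
            · intro h
              have := hτadj _ _ h
              rwa [hτσ, hτσ] at this
            · exact hσadj u v }
      have hσid : ∀ v, σ v = v := hAut ψ
      intro x
      cases x with
      | inl v => rw [hσ, hσid]
      | inr e =>
        obtain ⟨f, hf⟩ := hR e
        rw [hf]
        congr 1
        obtain ⟨e, he⟩ := e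
        induction e using Sym2.ind with
        | _ a b =>
          have hab : G.Adj a b := he
          have hua : (subdivisionGraph G).Adj (Sum.inl a) (Sum.inr ⟨s(a,b), he⟩) :=
            (subdiv_adj_lr G a _).mpr (by simp)
          have hub : (subdivisionGraph G).Adj (Sum.inl b) (Sum.inr ⟨s(a,b), he⟩) :=
            (subdiv_adj_lr G b _).mpr (by simp)
          have ha' : a ∈ (f : Sym2 V) := by
            have := φ.map_adj_iff.mpr hua
            rw [hσ, hσid, hf, subdiv_adj_lr] at this
            exact this
          have hb' : b ∈ (f : Sym2 V) := by
            have := φ.map_adj_iff.mpr hub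
            rw [hσ, hσid, hf, subdiv_adj_lr] at this
            exact this
          have : (f : Sym2 V) = s(a, b) := (Sym2.mem_and_mem_iff hab.ne).mp ⟨ha', hb'⟩
          exact Subtype.ext this
  -- compute the infimum
  have hub : distinguishingChromaticNumber (subdivisionGraph G) ≤ 2 := Nat.sInf_le h2
  have hlb : 2 ≤ distinguishingChromaticNumber (subdivisionGraph G) := by
    refine le_csInf ⟨2, h2⟩ ?_
    rintro m ⟨cm, hproper, -⟩
    by_contra hm
    interval_cases m
    · exact (cm (Sum.inl a₀)).elim0
    · have hadj : (subdivisionGraph G).Adj (Sum.inl a₀) (Sum.inr ⟨s(a₀, b₀), hab₀⟩) :=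
        (subdiv_adj_lr G a₀ _).mpr (by simp)
      exact hproper _ _ hadj (Subsingleton.elim _ _)
  omega
end
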